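/- arXiv:2506.05251 — 7 statements merged into one kernel-verified Lean document; each statement's English description precedes it below -/
import Mathlib

section
/- Let {U(S)} be the NTU LP game given by a production matrix A, endowments b^i, and valuations v^i for players i in a finite nonempty set N. Suppose that for every player i ∈ N the valuation vector v^i lies in the dual cone X*(S) of the design space X(S) for every nonempty coalition S ⊆ N. Then the game is balanced; that is, for every balanced collection 𝒮 of nonempty coalitions of N, the intersection ⋂_{S∈𝒮} U(S) is contained in U(N). -/
open Finset

/-- The design space `X(S)` of a coalition `S` in an NTU LP game:
nonnegative production vectors `x` with `A x ≤ b(S) = ∑_{i ∈ S} bᵢ`. -/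
def designSpace {K J N : Type*} [Fintype J] (A : K → J → ℝ) (b : N → K → ℝ)
    (S : Finset N) : Set (J → ℝ) :=
  {x | (∀ j, 0 ≤ x j) ∧ ∀ k, (∑ j, A k j * x j) ≤ ∑ i ∈ S, b i k}

/-- The utility space `U(S)` of a coalition `S`:
utility vectors `u` such that some `x ∈ X(S)` gives each member `i ∈ S` at least `uᵢ`. -/
def utilitySpace {K J N : Type*} [Fintype J] (A : K → J → ℝ) (b : N → K → ℝ)
    (v : N → J → ℝ) (S : Finset N) : Set (N → ℝ) :=
  {u | ∃ x ∈ designSpace A b S, ∀ i ∈ S, u i ≤ ∑ j, v i j * x j}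

/-- If every valuation vector `vⁱ` lies in the dual cone of `X(S)` for every nonempty
coalition `S`, then the NTU LP game is balanced: for every balanced collection `𝒮`
with balancing weights `lam`, `⋂_{S ∈ 𝒮} U(S) ⊆ U(N)`. -/
theorem ntulp_balanced {K J N : Type*} [Fintype J] [Fintype K] [Fintype N] [Nonempty N]
    [DecidableEq N]
    (A : K → J → ℝ) (b : N → K → ℝ) (v : N → J → ℝ)
    (hv : ∀ i : N, ∀ S : Finset N, S.Nonempty →
      ∀ x ∈ designSpace A b S, 0 ≤ ∑ j, v i j * x j)
    (𝒮 : Finset (Finset N)) (hSne : ∀ S ∈ 𝒮, S.Nonempty)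
    (lam : Finset N → ℝ) (hlam : ∀ S ∈ 𝒮, 0 ≤ lam S)
    (hbal : ∀ i : N, ∑ S ∈ 𝒮.filter (fun S => i ∈ S), lam S = 1) :
    (⋂ S ∈ 𝒮, utilitySpace A b v S) ⊆ utilitySpace A b v Finset.univ := by
  classical
  intro u hu
  simp only [Set.mem_iInter] at hu
  choose xs hxs hux using hu
  -- the aggregated plan
  set x : J → ℝ := fun j => ∑ S ∈ 𝒮.attach, lam S.1 * xs S.1 S.2 j with hxdef
  have key : ∀ (c : J → ℝ),
      (∑ j, c j * x j) = ∑ S ∈ 𝒮.attach, lam S.1 * ∑ j, c j * xs S.1 S.2 j := by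
    intro c
    simp only [hxdef]
    simp_rw [Finset.mul_sum]
    rw [Finset.sum_comm]
    exact Finset.sum_congr rfl fun S _ => Finset.sum_congr rfl fun j _ => by ring
  refine ⟨x, ⟨?_, ?_⟩, ?_⟩
  · intro j
    exact Finset.sum_nonneg fun S _ => mul_nonneg (hlam S.1 S.2) ((hxs S.1 S.2).1 j)
  · intro k
    rw [key (A k)]
    have h1 : ∑ S ∈ 𝒮.attach, lam S.1 * ∑ j, A k j * xs S.1 S.2 j
        ≤ ∑ S ∈ 𝒮.attach, lam S.1 * ∑ i ∈ S.1, b i k :=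
      Finset.sum_le_sum fun S _ =>
        mul_le_mul_of_nonneg_left ((hxs S.1 S.2).2 k) (hlam S.1 S.2)
    refine h1.trans_eq ?_
    rw [Finset.sum_attach 𝒮 (fun S => lam S * ∑ i ∈ S, b i k)]
    calc ∑ S ∈ 𝒮, lam S * ∑ i ∈ S, b i k
        = ∑ S ∈ 𝒮, ∑ i : N, if i ∈ S then lam S * b i k else 0 := by
          refine Finset.sum_congr rfl fun S _ => ?_
          rw [Finset.mul_sum, Finset.sum_ite_mem, Finset.univ_inter]
      _ = ∑ i : N, ∑ S ∈ 𝒮, if i ∈ S then lam S * b i k else 0 := Finset.sum_comm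
      _ = ∑ i : N, b i k := by
          refine Finset.sum_congr rfl fun i _ => ?_
          rw [← Finset.sum_filter, ← Finset.sum_mul, hbal i, one_mul]
  · intro i _
    rw [key (v i)]
    have h0 : u i = ∑ S ∈ 𝒮.attach, (if i ∈ S.1 then lam S.1 else 0) * u i := by
      rw [← Finset.sum_mul,
        Finset.sum_attach 𝒮 (fun S => if i ∈ S then lam S else 0),
        ← Finset.sum_filter, hbal i, one_mul]
    rw [h0]
    refine Finset.sum_le_sum fun S _ => ?_
    by_cases hiS : i ∈ S.1
    · simp only [hiS, if_true]
      exact mul_le_mul_of_nonneg_left (hux S.1 S.2 i hiS) (hlam S.1 S.2)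
    · simp only [hiS, if_false, zero_mul]
      exact mul_nonneg (hlam S.1 S.2) (hv i S.1 (hSne S.1 S.2) _ (hxs S.1 S.2))
end

section
/- Let {U(S)} be the NTU LP game given by A, {b^i}, and {v^i} on a finite nonempty player set N, and suppose that for every i ∈ N the valuation v^i lies in X*(S) for every nonempty coalition S ⊆ N. Then the game is totally balanced: for every nonempty subset M ⊆ N, the subgame on player set M (with the same A, endowments {b^i}_{i∈M}, and valuations restricted to M) is balanced, i.e., for every balanced collection 𝒮 of nonempty subsets of M with balancing weights, ⋂_{S∈𝒮} U(S) ⊆ U(M). -/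
open Finset

/-- If every valuation vector `vⁱ` lies in the dual cone of `X(S)` for every nonempty
coalition `S`, then the NTU LP game is totally balanced: for every nonempty `M ⊆ N`,
the subgame on `M` is balanced, i.e. for every balanced collection `𝒮` of nonempty
subsets of `M` with balancing weights `lam`, `⋂_{S ∈ 𝒮} U(S) ⊆ U(M)`. -/
theorem ntulp_totally_balanced {K J N : Type*} [Fintype J] [Fintype K] [Fintype N]
    [Nonempty N] [DecidableEq N]
    (A : K → J → ℝ) (b : N → K → ℝ) (v : N → J → ℝ)
    (hv : ∀ i : N, ∀ S : Finset N, S.Nonempty →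
      ∀ x ∈ designSpace A b S, 0 ≤ ∑ j, v i j * x j)
    (M : Finset N) (hM : M.Nonempty)
    (𝒮 : Finset (Finset N)) (hSne : ∀ S ∈ 𝒮, S.Nonempty) (hSsub : ∀ S ∈ 𝒮, S ⊆ M)
    (lam : Finset N → ℝ) (hlam : ∀ S ∈ 𝒮, 0 ≤ lam S)
    (hbal : ∀ i ∈ M, ∑ S ∈ 𝒮.filter (fun S => i ∈ S), lam S = 1) :
    (⋂ S ∈ 𝒮, utilitySpace A b v S) ⊆ utilitySpace A b v M := by
  intro u hu
  simp only [Set.mem_iInter] at hu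
  choose! x hx hux using hu
  refine ⟨fun j => ∑ S ∈ 𝒮, lam S * x S j, ⟨?_, ?_⟩, ?_⟩
  · intro j
    exact Finset.sum_nonneg fun S hS => mul_nonneg (hlam S hS) ((hx S hS).1 j)
  · intro k
    have h1 : ∑ j, A k j * ∑ S ∈ 𝒮, lam S * x S j
        = ∑ S ∈ 𝒮, lam S * ∑ j, A k j * x S j := by
      simp_rw [Finset.mul_sum]
      rw [Finset.sum_comm]
      congr 1; ext S; congr 1; ext j; ring
    rw [h1]
    have h2 : ∑ S ∈ 𝒮, lam S * ∑ j, A k j * x S j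
        ≤ ∑ S ∈ 𝒮, lam S * ∑ i ∈ S, b i k :=
      Finset.sum_le_sum fun S hS =>
        mul_le_mul_of_nonneg_left ((hx S hS).2 k) (hlam S hS)
    refine h2.trans (le_of_eq ?_)
    have h3 : ∀ S ∈ 𝒮, lam S * ∑ i ∈ S, b i k
        = ∑ i ∈ M, (if i ∈ S then lam S * b i k else 0) := by
      intro S hS
      rw [Finset.mul_sum, ← Finset.sum_filter]
      congr 1
      rw [Finset.filter_mem_eq_inter, Finset.inter_eq_right.mpr (hSsub S hS)]
    rw [Finset.sum_congr rfl h3, Finset.sum_comm]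
    refine Finset.sum_congr rfl fun i hi => ?_
    rw [← Finset.sum_filter, ← Finset.sum_mul, hbal i hi, one_mul]
  · intro i hi
    have hsum : ∑ j, v i j * ∑ S ∈ 𝒮, lam S * x S j
        = ∑ S ∈ 𝒮, lam S * ∑ j, v i j * x S j := by
      simp_rw [Finset.mul_sum]
      rw [Finset.sum_comm]
      congr 1; ext S; congr 1; ext j; ring
    rw [hsum]
    have h4 : ∑ S ∈ 𝒮.filter (fun S => i ∈ S), lam S * ∑ j, v i j * x S j
        ≤ ∑ S ∈ 𝒮, lam S * ∑ j, v i j * x S j := by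
      refine Finset.sum_le_sum_of_subset_of_nonneg (Finset.filter_subset _ _) ?_
      intro S hS _
      exact mul_nonneg (hlam S hS) (hv i S (hSne S hS) (x S) (hx S hS))
    refine le_trans ?_ h4
    calc u i = (∑ S ∈ 𝒮.filter (fun S => i ∈ S), lam S) * u i := by
          rw [hbal i hi, one_mul]
      _ = ∑ S ∈ 𝒮.filter (fun S => i ∈ S), lam S * u i := by
          rw [Finset.sum_mul]
      _ ≤ _ := by
          refine Finset.sum_le_sum fun S hS => ?_
          rw [Finset.mem_filter] at hS
          exact mul_le_mul_of_nonneg_left (hux S hS.1 i hS.2) (hlam S hS.1)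
end

section
/- Let A ∈ ℝ^{K×J} and b^i ∈ ℝ^K for i in a finite nonempty set N, and for each nonempty S ⊆ N define X(S) = {x ∈ ℝ^J : x ≥ 0, A x ≤ Σ_{i∈S} b^i}. If X({i}) is nonempty for every i ∈ N, then X(S) is nonempty for every nonempty coalition S ⊆ N; if in addition X({i}) is bounded for every i ∈ N, then X(S) is bounded for every nonempty coalition S ⊆ N. -/
/-!
Nonemptiness is additive: the sum of points of `X({i})`, `i ∈ S`, lies in `X(S)`.
For boundedness, a nonempty bounded `X({i})` contains no ray `x + t c` (`t ≥ 0`), so the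
recession cone `{c ≥ 0 : A c ≤ 0}` is trivial. Then the total violation
`∑ₖ max ((A c)ₖ) 0` is positive on the standard simplex, hence bounded below there by some
`ε > 0` by compactness; by homogeneity `ε ∑ⱼ xⱼ ≤ ∑ₖ max (dₖ) 0` for every `x ≥ 0` with
`A x ≤ d`, which bounds every such polyhedron, in particular every `X(S)`.
-/

open Finset

lemma eq_zero_of_isBounded_of_forall_add_smul_mem {E : Type*} [NormedAddCommGroup E]
    [NormedSpace ℝ E] {s : Set E} (hs : Bornology.IsBounded s) {x c : E}
    (hray : ∀ t : ℝ, 0 ≤ t → x + t • c ∈ s) : c = 0 := by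
  obtain ⟨C, hC⟩ := isBounded_iff_forall_norm_le.mp hs
  by_contra hc
  have hc' : 0 < ‖c‖ := norm_pos_iff.mpr hc
  have hC0 : 0 ≤ C := (norm_nonneg _).trans (hC _ (hray 0 le_rfl))
  set t := (C + ‖x‖ + 1) / ‖c‖
  have ht : 0 ≤ t := by positivity
  have htc : ‖t • c‖ = C + ‖x‖ + 1 := by
    rw [norm_smul, Real.norm_of_nonneg ht, div_mul_cancel₀ _ hc'.ne']
  have : C + ‖x‖ + 1 ≤ C + ‖x‖ :=
    calc C + ‖x‖ + 1 = ‖(x + t • c) - x‖ := by rw [add_sub_cancel_left, htc]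
      _ ≤ ‖x + t • c‖ + ‖x‖ := norm_sub_le _ _
      _ ≤ C + ‖x‖ := by grw [hC _ (hray t ht)]
  linarith

namespace Matrix

variable {K J : Type*} [Fintype J]

def nonnegSolutions (A : Matrix K J ℝ) (d : K → ℝ) : Set (J → ℝ) :=
  {x | 0 ≤ x ∧ A *ᵥ x ≤ d}

section Nonneg

variable {A : Matrix K J ℝ} {d e : K → ℝ} {x y : J → ℝ}

lemma add_mem_nonnegSolutions (hx : x ∈ A.nonnegSolutions d) (hy : y ∈ A.nonnegSolutions e) :
    x + y ∈ A.nonnegSolutions (d + e) :=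
  ⟨add_nonneg hx.1 hy.1, by rw [mulVec_add]; exact add_le_add hx.2 hy.2⟩

lemma smul_mem_nonnegSolutions_zero {t : ℝ} (ht : 0 ≤ t) (hx : x ∈ A.nonnegSolutions 0) :
    t • x ∈ A.nonnegSolutions 0 :=
  ⟨smul_nonneg ht hx.1, by rw [mulVec_smul]; exact smul_nonpos_of_nonneg_of_nonpos ht hx.2⟩

lemma nonnegSolutions_add_nonempty (hd : (A.nonnegSolutions d).Nonempty)
    (he : (A.nonnegSolutions e).Nonempty) : (A.nonnegSolutions (d + e)).Nonempty :=
  let ⟨_, hx⟩ := hd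
  let ⟨_, hy⟩ := he
  ⟨_, add_mem_nonnegSolutions hx hy⟩

lemma eq_zero_of_mem_nonnegSolutions_zero (hne : (A.nonnegSolutions d).Nonempty)
    (hbdd : Bornology.IsBounded (A.nonnegSolutions d)) {c : J → ℝ}
    (hc : c ∈ A.nonnegSolutions 0) : c = 0 := by
  obtain ⟨x, hx⟩ := hne
  refine eq_zero_of_isBounded_of_forall_add_smul_mem (x := x) hbdd fun t ht => ?_
  simpa using add_mem_nonnegSolutions hx (smul_mem_nonnegSolutions_zero ht hc)

end Nonneg

section Violation

variable [Fintype K] (A : Matrix K J ℝ)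

def violation (x : J → ℝ) : ℝ := ∑ k, max ((A *ᵥ x) k) 0

lemma continuous_violation : Continuous A.violation := by
  unfold violation
  fun_prop

lemma violation_smul {t : ℝ} (ht : 0 ≤ t) (x : J → ℝ) :
    A.violation (t • x) = t * A.violation x := by
  simp only [violation, mulVec_smul, Pi.smul_apply, smul_eq_mul, mul_sum,
    mul_max_of_nonneg _ _ ht, mul_zero]

lemma violation_le_of_mulVec_le {d : K → ℝ} {x : J → ℝ} (hx : A *ᵥ x ≤ d) :
    A.violation x ≤ ∑ k, max (d k) 0 :=
  sum_le_sum fun k _ => max_le_max (hx k) le_rfl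

variable {A}

lemma violation_pos_of_mem_stdSimplex (hrec : ∀ c ∈ A.nonnegSolutions 0, c = 0)
    {c : J → ℝ} (hc : c ∈ stdSimplex ℝ J) : 0 < A.violation c := by
  have hc0 : c ≠ 0 := by
    rintro rfl
    simpa using hc.2
  obtain ⟨k, hk⟩ : ∃ k, 0 < (A *ᵥ c) k := by
    by_contra! h
    exact hc0 (hrec c ⟨hc.1, h⟩)
  exact (lt_max_of_lt_left hk).trans_le
    (single_le_sum (f := fun k => max ((A *ᵥ c) k) 0) (fun _ _ => le_max_right _ _)
      (mem_univ k))

lemma exists_pos_mul_sum_le_violation (hrec : ∀ c ∈ A.nonnegSolutions 0, c = 0) :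
    ∃ ε > 0, ∀ x : J → ℝ, 0 ≤ x → ε * ∑ j, x j ≤ A.violation x := by
  obtain ⟨ε, hε, hmin⟩ := (isCompact_stdSimplex ℝ J).exists_forall_le'
    A.continuous_violation.continuousOn fun c hc => violation_pos_of_mem_stdSimplex hrec hc
  refine ⟨ε, hε, fun x hx => ?_⟩
  have hs0 : 0 ≤ ∑ j, x j := sum_nonneg fun j _ => hx j
  set s := ∑ j, x j with hs_def
  rcases hs0.eq_or_lt with hs | hs
  · rw [← hs, mul_zero]
    exact sum_nonneg fun _ _ => le_max_right _ _
  have hxs : s⁻¹ • x ∈ stdSimplex ℝ J :=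
    ⟨fun j => mul_nonneg (inv_nonneg.mpr hs.le) (hx j), by
      simp only [Pi.smul_apply, smul_eq_mul, ← mul_sum, ← hs_def, inv_mul_cancel₀ hs.ne']⟩
  have := hmin _ hxs
  rw [violation_smul A (inv_nonneg.mpr hs.le), ← div_eq_inv_mul, le_div_iff₀ hs] at this
  linarith

theorem isBounded_nonnegSolutions (hrec : ∀ c ∈ A.nonnegSolutions 0, c = 0) (d : K → ℝ) :
    Bornology.IsBounded (A.nonnegSolutions d) := by
  obtain ⟨ε, hε, hcoer⟩ := exists_pos_mul_sum_le_violation hrec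
  refine (Metric.isBounded_Icc 0 fun _ => (∑ k, max (d k) 0) / ε).subset fun x hx => ⟨hx.1, ?_⟩
  intro j
  rw [le_div_iff₀ hε, mul_comm]
  calc ε * x j ≤ ε * ∑ j, x j :=
        mul_le_mul_of_nonneg_left (single_le_sum (fun j _ => hx.1 j) (mem_univ j)) hε.le
    _ ≤ A.violation x := hcoer x hx.1
    _ ≤ ∑ k, max (d k) 0 := A.violation_le_of_mulVec_le hx.2

end Violation

end Matrix

lemma designSpace_eq_nonnegSolutions {K J N : Type*} [Fintype J] (A : K → J → ℝ)
    (b : N → K → ℝ) (S : Finset N) :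
    designSpace A b S = Matrix.nonnegSolutions A (∑ i ∈ S, b i) := by
  ext x
  simp only [designSpace, Matrix.nonnegSolutions, Pi.le_def,
    Matrix.mulVec, dotProduct, Finset.sum_apply, Pi.zero_apply]

/-- If `X({i})` is nonempty for every player `i`, then `X(S)` is nonempty for every
nonempty coalition `S`; if in addition every `X({i})` is bounded, then `X(S)` is
bounded for every nonempty coalition `S`. -/
theorem designSpace_nonempty_and_bounded {K J N : Type*} [Fintype J] [Fintype K]
    [Nonempty N]
    (A : K → J → ℝ) (b : N → K → ℝ)
    (hne : ∀ i : N, (designSpace A b {i}).Nonempty) :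
    (∀ S : Finset N, S.Nonempty → (designSpace A b S).Nonempty) ∧
    ((∀ i : N, Bornology.IsBounded (designSpace A b {i})) →
      ∀ S : Finset N, S.Nonempty → Bornology.IsBounded (designSpace A b S)) := by
  simp only [designSpace_eq_nonnegSolutions, sum_singleton] at hne ⊢
  refine ⟨fun S hS => sum_induction_nonempty b (fun d => (Matrix.nonnegSolutions A d).Nonempty)
    (fun _ _ => Matrix.nonnegSolutions_add_nonempty) hS fun i _ => hne i, fun hbdd S _ => ?_⟩
  obtain ⟨i⟩ := ‹Nonempty N›
  exact Matrix.isBounded_nonnegSolutions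
    (fun c => Matrix.eq_zero_of_mem_nonnegSolutions_zero (hne i) (hbdd i)) _
end

section
/- Let {U(S)} be the NTU LP game given by A, {b^i}, and {v^i} on a finite nonempty player set N, with each X({i}) nonempty and bounded, and suppose the core C(N) is nonempty. Then C(N) is the union of a finite family of polytopes (compact polyhedra) in ℝ^N; in particular C(N) is mixed-integer-programming representable. -/
open Finset

/-- The core `C(N) = U(N) \ ⋃_{∅ ≠ S ⊆ N} int U(S)` of an NTU LP game. -/
def core {K J N : Type*} [Fintype J] [Fintype N] (A : K → J → ℝ) (b : N → K → ℝ)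
    (v : N → J → ℝ) : Set (N → ℝ) :=
  utilitySpace A b v Finset.univ \
    ⋃ (S : Finset N) (_ : S.Nonempty), interior (utilitySpace A b v S)

open Finset

def polySet {ι : Type*} [Fintype ι] {q : ℕ} (c : Fin q → ι → ℝ) (d : Fin q → ℝ) :
    Set (ι → ℝ) := {x | ∀ l, ∑ i, c l i * x i ≤ d l}

/-- Fourier–Motzkin: new coefficient rows after eliminating one variable. -/
noncomputable def fmC {ι : Type*} {q : ℕ} (a : Fin q → ℝ) (g : Fin q → ι → ℝ) (p : Fin q × Fin q) :
    ι → ℝ :=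
  if 0 < a p.1 ∧ a p.2 < 0 then fun i => a p.1 * g p.2 i - a p.2 * g p.1 i
  else if a p.1 = 0 ∧ p.1 = p.2 then g p.1 else 0

noncomputable def fmD {q : ℕ} (a : Fin q → ℝ) (d : Fin q → ℝ) (p : Fin q × Fin q) : ℝ :=
  if 0 < a p.1 ∧ a p.2 < 0 then a p.1 * d p.2 - a p.2 * d p.1
  else if a p.1 = 0 ∧ p.1 = p.2 then d p.1 else 0

lemma fm_step {ι : Type*} [Fintype ι] {q : ℕ} (a : Fin q → ℝ) (g : Fin q → ι → ℝ)
    (d : Fin q → ℝ) :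
    {y : ι → ℝ | ∃ t : ℝ, ∀ l, a l * t + ∑ i, g l i * y i ≤ d l} =
    {y : ι → ℝ | ∀ p : Fin q × Fin q, ∑ i, fmC a g p i * y i ≤ fmD a d p} := by
  ext y
  simp only [Set.mem_setOf_eq]
  set G : Fin q → ℝ := fun l => ∑ i, g l i * y i with hG
  constructor
  · rintro ⟨t, ht⟩ ⟨l, l'⟩
    by_cases h1 : 0 < a l ∧ a l' < 0
    · have e1 : ∑ i, fmC a g (l, l') i * y i = a l * G l' - a l' * G l := by
        simp only [fmC, if_pos h1, hG, sub_mul, mul_assoc]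
        rw [Finset.sum_sub_distrib, Finset.mul_sum, Finset.mul_sum]
      rw [e1]
      have e2 : fmD a d (l, l') = a l * d l' - a l' * d l := by simp [fmD, if_pos h1]
      rw [e2]
      have H1 := ht l
      have H2 := ht l'
      nlinarith [h1.1, h1.2]
    · by_cases h2 : a l = 0 ∧ l = l'
      · have e1 : ∑ i, fmC a g (l, l') i * y i = G l := by
          simp [fmC, if_neg h1, if_pos h2, hG]
        have e2 : fmD a d (l, l') = d l := by simp [fmD, if_neg h1, if_pos h2]
        rw [e1, e2]
        have := ht l
        rw [h2.1] at this
        linarith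
      · simp [fmC, fmD, if_neg h1, if_neg h2]
  · intro hp
    classical
    set Pos : Finset (Fin q) := univ.filter (fun l => 0 < a l) with hPos
    set Neg : Finset (Fin q) := univ.filter (fun l => a l < 0) with hNeg
    have diag : ∀ l, a l = 0 → G l ≤ d l := by
      intro l hl
      have := hp (l, l)
      simp [fmC, fmD, hl, lt_irrefl, if_neg, hG] at this
      · convert this using 2 <;> simp [hl]
    by_cases hPne : Pos.Nonempty
    · refine ⟨Pos.inf' hPne (fun l => (d l - G l) / a l), fun l => ?_⟩
      rcases lt_trichotomy (a l) 0 with hal | hal | hal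
      · -- a l < 0 : use pair with the minimizer
        obtain ⟨l₀, hl₀mem, hl₀⟩ := Finset.exists_mem_eq_inf' hPne (fun l => (d l - G l) / a l)
        have hl₀pos : 0 < a l₀ := by
          rw [hPos] at hl₀mem; simpa using hl₀mem
        rw [hl₀]
        have hpair := hp (l₀, l)
        have e1 : ∑ i, fmC a g (l₀, l) i * y i = a l₀ * G l - a l * G l₀ := by
          simp only [fmC, if_pos (show 0 < a l₀ ∧ a l < 0 from ⟨hl₀pos, hal⟩), hG, sub_mul, mul_assoc]
          rw [Finset.sum_sub_distrib, Finset.mul_sum, Finset.mul_sum]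
        have e2 : fmD a d (l₀, l) = a l₀ * d l - a l * d l₀ := by
          simp [fmD, if_pos (show 0 < a l₀ ∧ a l < 0 from ⟨hl₀pos, hal⟩)]
        rw [e1, e2] at hpair
        have key : a l * ((d l₀ - G l₀) / a l₀) = a l * (d l₀ - G l₀) / a l₀ := by ring
        rw [key, div_add' _ _ _ (ne_of_gt hl₀pos), div_le_iff₀ hl₀pos]
        nlinarith
      · have := diag l hal
        rw [hal]; linarith
      · -- a l > 0
        have hmem : l ∈ Pos := by rw [hPos]; simp [hal]
        have hle := Finset.inf'_le (fun l => (d l - G l) / a l) hmem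
        have : a l * (Pos.inf' hPne fun l => (d l - G l) / a l) ≤ a l * ((d l - G l) / a l) :=
          mul_le_mul_of_nonneg_left hle (le_of_lt hal)
        rw [mul_div_cancel₀ _ (ne_of_gt hal)] at this
        linarith
    · by_cases hNne : Neg.Nonempty
      · refine ⟨Neg.sup' hNne (fun l => (d l - G l) / a l), fun l => ?_⟩
        rcases lt_trichotomy (a l) 0 with hal | hal | hal
        · have hmem : l ∈ Neg := by rw [hNeg]; simp [hal]
          have hle := Finset.le_sup' (fun l => (d l - G l) / a l) hmem
          have : a l * (Neg.sup' hNne fun l => (d l - G l) / a l) ≤ a l * ((d l - G l) / a l) :=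
            mul_le_mul_of_nonpos_left hle (le_of_lt hal)
          rw [mul_div_cancel₀ _ (ne_of_lt hal)] at this
          linarith
        · have := diag l hal
          rw [hal]; linarith
        · exact absurd (by rw [hPos]; simp [hal] : l ∈ Pos) (by simp [Finset.not_nonempty_iff_eq_empty.mp hPne])
      · refine ⟨0, fun l => ?_⟩
        have hal : a l = 0 := by
          rcases lt_trichotomy (a l) 0 with h | h | h
          · exact absurd (by rw [hNeg]; simp [h] : l ∈ Neg)
              (by simp [Finset.not_nonempty_iff_eq_empty.mp hNne])
          · exact h
          · exact absurd (by rw [hPos]; simp [h] : l ∈ Pos)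
              (by simp [Finset.not_nonempty_iff_eq_empty.mp hPne])
        have := diag l hal
        rw [hal]; linarith

def IsPolyh {ι : Type*} [Fintype ι] (P : Set (ι → ℝ)) : Prop :=
  ∃ (q : ℕ) (c : Fin q → ι → ℝ) (d : Fin q → ℝ), P = polySet c d

lemma isPolyh_reindex {ι L : Type*} [Fintype ι] [Fintype L] (c : L → ι → ℝ) (d : L → ℝ) :
    IsPolyh {x : ι → ℝ | ∀ l : L, ∑ i, c l i * x i ≤ d l} := by
  refine ⟨Fintype.card L, fun l' => c ((Fintype.equivFin L).symm l'),
    fun l' => d ((Fintype.equivFin L).symm l'), ?_⟩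
  ext x
  simp only [Set.mem_setOf_eq, polySet]
  exact ⟨fun h l' => h _, fun h l => by simpa using h ((Fintype.equivFin L) l)⟩

lemma sum_split {κ : Type*} [Fintype κ] [DecidableEq κ] (j₀ : κ) (f : κ → ℝ) :
    ∑ j, f j = f j₀ + ∑ j : {j // j ≠ j₀}, f j.1 := by
  rw [← Finset.add_sum_erase _ f (Finset.mem_univ j₀)]
  congr 1
  rw [Finset.sum_subtype (univ.erase j₀) (p := fun j => j ≠ j₀) (by simp) f]

lemma elim_vars {ι : Type u} [Fintype ι] :
    ∀ (n : ℕ) (κ : Type v) [Fintype κ], Fintype.card κ = n →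
      ∀ (q : ℕ) (c : Fin q → (ι ⊕ κ) → ℝ) (d : Fin q → ℝ),
        IsPolyh {y : ι → ℝ | ∃ x : κ → ℝ,
          ∀ l, (∑ i, c l (Sum.inl i) * y i) + (∑ j, c l (Sum.inr j) * x j) ≤ d l} := by
  intro n
  induction n with
  | zero =>
    intro κ _ hcard q c d
    have : IsEmpty κ := Fintype.card_eq_zero_iff.mp hcard
    have hset : {y : ι → ℝ | ∃ x : κ → ℝ,
        ∀ l, (∑ i, c l (Sum.inl i) * y i) + (∑ j, c l (Sum.inr j) * x j) ≤ d l} =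
        {y : ι → ℝ | ∀ l : Fin q, ∑ i, c l (Sum.inl i) * y i ≤ d l} := by
      ext y
      simp only [Set.mem_setOf_eq, Finset.univ_eq_empty, Finset.sum_empty, add_zero]
      exact ⟨fun ⟨x, hx⟩ => hx, fun h => ⟨fun j => (this.false j).elim, h⟩⟩
    rw [hset]
    exact isPolyh_reindex _ _
  | succ n ih =>
    intro κ _ hcard q c d
    classical
    have hpos : 0 < Fintype.card κ := by omega
    obtain ⟨j₀⟩ := Fintype.card_pos_iff.mp hpos
    set κ' := {j : κ // j ≠ j₀} with hκ'
    have hcard' : Fintype.card κ' = n := by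
      have h : Fintype.card {j : κ // j ≠ j₀} = Fintype.card κ - 1 := by
        simp [Fintype.card_subtype_compl]
      have h2 : Fintype.card κ' = Fintype.card {j : κ // j ≠ j₀} :=
        Fintype.card_congr (Equiv.cast hκ')
      omega
    set a : Fin q → ℝ := fun l => c l (Sum.inr j₀) with ha
    set g : Fin q → (ι ⊕ κ') → ℝ :=
      fun l => Sum.elim (fun i => c l (Sum.inl i)) (fun j => c l (Sum.inr j.1)) with hg
    -- new system after eliminating the variable j₀
    set e : Fin (q * q) ≃ Fin q × Fin q := finProdFinEquiv.symm with he
    set c₂ : Fin (q * q) → (ι ⊕ κ') → ℝ := fun l' => fmC a g (e l') with hc₂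
    set d₂ : Fin (q * q) → ℝ := fun l' => fmD a d (e l') with hd₂
    have key : {y : ι → ℝ | ∃ x : κ → ℝ,
        ∀ l, (∑ i, c l (Sum.inl i) * y i) + (∑ j, c l (Sum.inr j) * x j) ≤ d l} =
        {y : ι → ℝ | ∃ x' : κ' → ℝ,
          ∀ l', (∑ i, c₂ l' (Sum.inl i) * y i) + (∑ j, c₂ l' (Sum.inr j) * x' j) ≤ d₂ l'} := by
      ext y
      simp only [Set.mem_setOf_eq]
      have step1 : (∃ x : κ → ℝ,
          ∀ l, (∑ i, c l (Sum.inl i) * y i) + (∑ j, c l (Sum.inr j) * x j) ≤ d l) ↔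
          (∃ x' : κ' → ℝ, ∃ t : ℝ,
            ∀ l, a l * t + ∑ z, g l z * (Sum.elim y x') z ≤ d l) := by
        constructor
        · rintro ⟨x, hx⟩
          refine ⟨fun j => x j.1, x j₀, fun l => ?_⟩
          have := hx l
          rw [sum_split j₀ (fun j => c l (Sum.inr j) * x j)] at this
          rw [Fintype.sum_sum_type]
          simp only [hg, Sum.elim_inl, Sum.elim_inr, ha]
          linarith
        · rintro ⟨x', t, hx⟩
          refine ⟨fun j => if h : j = j₀ then t else x' ⟨j, h⟩, fun l => ?_⟩
          have := hx l
          rw [Fintype.sum_sum_type] at this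
          simp only [hg, Sum.elim_inl, Sum.elim_inr, ha] at this
          rw [sum_split j₀ (fun j => c l (Sum.inr j) *
            (if h : j = j₀ then t else x' ⟨j, h⟩))]
          have e0 : (if h : j₀ = j₀ then t else x' ⟨j₀, h⟩) = t := by simp
          rw [e0]
          have hrw : ∑ j : κ', c l (Sum.inr j.1) *
              (if h : j.1 = j₀ then t else x' ⟨j.1, h⟩) =
              ∑ j : κ', c l (Sum.inr j.1) * x' j := by
            apply Finset.sum_congr rfl
            intro j _
            rw [dif_neg j.2]
          rw [hrw]
          linarith
      have step2 : ∀ x' : κ' → ℝ,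
          (∃ t : ℝ, ∀ l, a l * t + ∑ z, g l z * (Sum.elim y x') z ≤ d l) ↔
          (∀ p : Fin q × Fin q, ∑ z, fmC a g p z * (Sum.elim y x') z ≤ fmD a d p) := by
        intro x'
        exact Set.ext_iff.mp (fm_step a g d) (Sum.elim y x')
      rw [step1]
      constructor
      · rintro ⟨x', hx⟩
        refine ⟨x', fun l' => ?_⟩
        have := ((step2 x').mp hx) (e l')
        rw [Fintype.sum_sum_type] at this
        simpa [hc₂, hd₂] using this
      · rintro ⟨x', hx⟩
        refine ⟨x', (step2 x').mpr fun p => ?_⟩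
        have := hx (e.symm p)
        rw [Fintype.sum_sum_type]
        simp only [hc₂, hd₂, Equiv.apply_symm_apply] at this
        simpa using this
    rw [key]
    exact ih κ' hcard' (q * q) c₂ d₂

/-- Eliminating a block of variables indexed by any fintype, rows indexed by any fintype. -/
lemma elim_block {ι : Type u} {κ : Type v} {L : Type w} [Fintype ι] [Fintype κ] [Fintype L]
    (c : L → (ι ⊕ κ) → ℝ) (d : L → ℝ) :
    IsPolyh {y : ι → ℝ | ∃ x : κ → ℝ,
      ∀ l, (∑ i, c l (Sum.inl i) * y i) + (∑ j, c l (Sum.inr j) * x j) ≤ d l} := by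
  classical
  set e : Fin (Fintype.card L) ≃ L := (Fintype.equivFin L).symm with he
  have hset : {y : ι → ℝ | ∃ x : κ → ℝ,
      ∀ l, (∑ i, c l (Sum.inl i) * y i) + (∑ j, c l (Sum.inr j) * x j) ≤ d l} =
      {y : ι → ℝ | ∃ x : κ → ℝ, ∀ l' : Fin (Fintype.card L),
        (∑ i, c (e l') (Sum.inl i) * y i) + (∑ j, c (e l') (Sum.inr j) * x j) ≤ d (e l')} := by
    ext y
    simp only [Set.mem_setOf_eq]
    constructor
    · rintro ⟨x, hx⟩; exact ⟨x, fun l' => hx (e l')⟩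
    · rintro ⟨x, hx⟩; exact ⟨x, fun l => by simpa using hx (e.symm l)⟩
  rw [hset]
  exact elim_vars (Fintype.card κ) κ rfl _ _ _

/-- The utility space of any coalition is a polyhedron. -/
lemma utilitySpace_isPolyh {K J N : Type*} [Fintype J] [Fintype K] [Fintype N]
    (A : K → J → ℝ) (b : N → K → ℝ) (v : N → J → ℝ) (S : Finset N) :
    IsPolyh (utilitySpace A b v S) := by
  classical
  set L := J ⊕ (K ⊕ N) with hL
  set c0 : L → (N ⊕ J) → ℝ := fun l =>
    Sum.elim
      (fun j => Sum.elim (fun _ => 0) (fun j' => if j' = j then (-1 : ℝ) else 0))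
      (Sum.elim
        (fun k => Sum.elim (fun _ => 0) (fun j => A k j))
        (fun i => if i ∈ S then
            Sum.elim (fun i' => if i' = i then (1 : ℝ) else 0) (fun j => -(v i j))
          else 0)) l with hc0
  set d0 : L → ℝ := fun l =>
    Sum.elim (fun _ => 0)
      (Sum.elim (fun k => ∑ i ∈ S, b i k) (fun _ => 0)) l with hd0
  have hset : utilitySpace A b v S = {u : N → ℝ | ∃ x : J → ℝ,
      ∀ l : L, (∑ i, c0 l (Sum.inl i) * u i) + (∑ j, c0 l (Sum.inr j) * x j) ≤ d0 l} := by
    ext u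
    simp only [utilitySpace, designSpace, Set.mem_setOf_eq]
    constructor
    · rintro ⟨x, ⟨hx0, hxA⟩, hv⟩
      refine ⟨x, fun l => ?_⟩
      rcases l with j | k | i
      · simpa [hc0, hd0, ite_mul] using hx0 j
      · simpa [hc0, hd0] using hxA k
      · by_cases hiS : i ∈ S
        · have := hv i hiS
          simp only [hc0, hd0, Sum.elim_inr, Sum.elim_inl, if_pos hiS, ite_mul, one_mul,
            zero_mul, Finset.sum_ite_eq', Finset.mem_univ, if_true, neg_mul]
          rw [Finset.sum_neg_distrib]
          linarith
        · simp [hc0, hd0, if_neg hiS]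
    · rintro ⟨x, hx⟩
      refine ⟨x, ⟨fun j => ?_, fun k => ?_⟩, fun i hiS => ?_⟩
      · have := hx (Sum.inl j)
        simp only [hc0, hd0, Sum.elim_inl, Sum.elim_inr, zero_mul, Finset.sum_const_zero,
          zero_add, ite_mul, neg_mul, one_mul, Finset.sum_ite_eq', Finset.mem_univ,
          if_true] at this
        linarith
      · have := hx (Sum.inr (Sum.inl k))
        simpa [hc0, hd0] using this
      · have := hx (Sum.inr (Sum.inr i))
        simp only [hc0, hd0, Sum.elim_inr, Sum.elim_inl, if_pos hiS, ite_mul, one_mul,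
          zero_mul, Finset.sum_ite_eq', Finset.mem_univ, if_true, neg_mul] at this
        rw [Finset.sum_neg_distrib] at this
        linarith
  rw [hset]
  exact elim_block c0 d0

/-- Every polyhedron has a description in which every row is nontrivial. -/
lemma polySet_prune {ι : Type*} [Fintype ι] {q : ℕ} (c : Fin q → ι → ℝ) (d : Fin q → ℝ) :
    ∃ (q' : ℕ) (c' : Fin q' → ι → ℝ) (d' : Fin q' → ℝ),
      polySet c d = polySet c' d' ∧ ∀ l, c' l ≠ 0 ∨ d' l < 0 := by
  classical
  set L' := {l : Fin q // c l ≠ 0 ∨ d l < 0} with hL'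
  set e : Fin (Fintype.card L') ≃ L' := (Fintype.equivFin L').symm with he
  refine ⟨Fintype.card L', fun l' => c (e l').1, fun l' => d (e l').1, ?_, fun l' => (e l').2⟩
  ext x
  simp only [polySet, Set.mem_setOf_eq]
  constructor
  · intro h l'
    exact h (e l').1
  · intro h l
    by_cases hl : c l ≠ 0 ∨ d l < 0
    · have := h (e.symm ⟨l, hl⟩)
      simpa using this
    · push_neg at hl
      have hc : ∀ i, c l i = 0 := fun i => congrFun hl.1 i
      simp only [hc, zero_mul, Finset.sum_const_zero]
      exact hl.2

/-- Complement of the interior of a polyhedron with nontrivial rows. -/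
lemma compl_interior_polySet {ι : Type*} [Fintype ι] {q : ℕ} (c : Fin q → ι → ℝ)
    (d : Fin q → ℝ) (hrows : ∀ l, c l ≠ 0 ∨ d l < 0) :
    (interior (polySet c d))ᶜ = ⋃ l, {x : ι → ℝ | d l ≤ ∑ i, c l i * x i} := by
  classical
  ext x
  simp only [Set.mem_compl_iff, Set.mem_iUnion, Set.mem_setOf_eq]
  constructor
  · intro hx
    by_contra hcon
    push_neg at hcon
    apply hx
    have hopen : IsOpen {y : ι → ℝ | ∀ l, ∑ i, c l i * y i < d l} := by
      have : {y : ι → ℝ | ∀ l, ∑ i, c l i * y i < d l} =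
          ⋂ l, {y : ι → ℝ | ∑ i, c l i * y i < d l} := by
        ext y; simp
      rw [this]
      refine isOpen_iInter_of_finite fun l => ?_
      exact isOpen_lt (by continuity) continuous_const
    have hsub : {y : ι → ℝ | ∀ l, ∑ i, c l i * y i < d l} ⊆ polySet c d :=
      fun y hy l => le_of_lt (hy l)
    exact interior_maximal hsub hopen hcon
  · rintro ⟨l, hl⟩ hx
    by_cases hc : c l = 0
    · -- then d l < 0 and the polyhedron is empty
      have hd : d l < 0 := (hrows l).resolve_left (by simpa using hc)
      have hxP : x ∈ polySet c d := interior_subset hx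
      have := hxP l
      simp only [hc, Pi.zero_apply, zero_mul, Finset.sum_const_zero] at this
      linarith
    · -- perturb in a coordinate where c l is nonzero
      obtain ⟨i₀, hi₀⟩ : ∃ i₀, c l i₀ ≠ 0 := by
        by_contra hcon; push_neg at hcon
        exact hc (funext hcon)
      obtain ⟨ε, hε, hball⟩ := Metric.isOpen_iff.mp isOpen_interior x hx
      set s : ℝ := if 0 < c l i₀ then ε / 2 else -(ε / 2) with hs
      have hcs : 0 < c l i₀ * s := by
        rcases lt_or_gt_of_ne hi₀ with h | h
        · rw [hs, if_neg (by linarith)]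
          nlinarith
        · rw [hs, if_pos h]
          nlinarith
      set x' : ι → ℝ := Function.update x i₀ (x i₀ + s) with hx'
      have hdist : dist x' x < ε := by
        have habs : |s| = ε / 2 := by
          rcases le_or_gt (c l i₀) 0 with h | h
          · rw [hs, if_neg (by linarith), abs_neg, abs_of_pos (by linarith)]
          · rw [hs, if_pos h, abs_of_pos (by linarith)]
        have : dist x' x ≤ ε / 2 := by
          rw [dist_pi_le_iff (by linarith)]
          intro i
          by_cases hii : i = i₀
          · subst hii
            simp [hx', Real.dist_eq, habs.le]
          · simp [hx', Function.update_of_ne hii]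
            linarith
        linarith
      have hx'P : x' ∈ polySet c d := interior_subset (hball (Metric.mem_ball.mpr hdist))
      have hsum : ∑ i, c l i * x' i = (∑ i, c l i * x i) + c l i₀ * s := by
        have hterm : ∀ i, c l i * x' i = c l i * x i + (if i = i₀ then c l i₀ * s else 0) := by
          intro i
          by_cases hii : i = i₀
          · subst hii
            simp [hx', Function.update_self]
            ring
          · simp [hx', Function.update_of_ne hii, hii]
        simp only [hterm, Finset.sum_add_distrib, Finset.sum_ite_eq', Finset.mem_univ, if_true]
      have := hx'P l
      rw [hsum] at this
      linarith

lemma designSpace_isClosed {K J N : Type*} [Fintype J] (A : K → J → ℝ) (b : N → K → ℝ)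
    (S : Finset N) : IsClosed (designSpace A b S) := by
  have : designSpace A b S =
      (⋂ j, {x : J → ℝ | 0 ≤ x j}) ∩ ⋂ k, {x : J → ℝ | ∑ j, A k j * x j ≤ ∑ i ∈ S, b i k} := by
    ext x; simp [designSpace]
  rw [this]
  refine IsClosed.inter (isClosed_iInter fun j => ?_) (isClosed_iInter fun k => ?_)
  · exact isClosed_le continuous_const (continuous_apply j)
  · exact isClosed_le (by continuity) continuous_const

lemma designSpace_univ_bounded {K J N : Type*} [Fintype J] [Fintype N] [Nonempty N]
    (A : K → J → ℝ) (b : N → K → ℝ)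
    (hne : ∀ i : N, (designSpace A b {i}).Nonempty)
    (hbd : ∀ i : N, Bornology.IsBounded (designSpace A b {i})) :
    Bornology.IsBounded (designSpace A b (Finset.univ : Finset N)) := by
  by_contra h
  rw [isBounded_iff_forall_norm_le] at h
  push_neg at h
  choose xx hxmem hxnorm using fun n : ℕ => h (n : ℝ)
  have hnorm_pos : ∀ n, 0 < ‖xx n‖ := fun n =>
    lt_of_le_of_lt (Nat.cast_nonneg n) (hxnorm n)
  set z : ℕ → (J → ℝ) := fun n => ‖xx n‖⁻¹ • xx n with hz
  have hz_sphere : ∀ n, z n ∈ Metric.sphere (0 : J → ℝ) 1 := by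
    intro n
    rw [mem_sphere_zero_iff_norm, hz]
    simp only [norm_smul, Real.norm_eq_abs, abs_inv, abs_of_pos (hnorm_pos n)]
    exact inv_mul_cancel₀ (ne_of_gt (hnorm_pos n))
  obtain ⟨z0, hz0s, φ, hφ, hconv⟩ := (isCompact_sphere (0 : J → ℝ) 1).tendsto_subseq hz_sphere
  have hcoord : ∀ j, Filter.Tendsto (fun n => z (φ n) j) Filter.atTop (nhds (z0 j)) :=
    fun j => ((continuous_apply j).tendsto z0).comp hconv
  have hz0nonneg : ∀ j, 0 ≤ z0 j := by
    intro j
    refine ge_of_tendsto (hcoord j) (Filter.Eventually.of_forall fun n => ?_)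
    exact mul_nonneg (inv_nonneg.mpr (norm_nonneg _)) ((hxmem (φ n)).1 j)
  have hnorm_tendsto : Filter.Tendsto (fun n => ‖xx (φ n)‖) Filter.atTop Filter.atTop := by
    refine Filter.tendsto_atTop_mono (fun n => ?_) tendsto_natCast_atTop_atTop
    calc ((n : ℝ)) ≤ (φ n : ℝ) := by exact_mod_cast hφ.le_apply
    _ ≤ ‖xx (φ n)‖ := (hxnorm (φ n)).le
  have hAz : ∀ k, ∑ j, A k j * z0 j ≤ 0 := by
    intro k
    have ht1 : Filter.Tendsto (fun n => ∑ j, A k j * z (φ n) j) Filter.atTop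
        (nhds (∑ j, A k j * z0 j)) :=
      tendsto_finset_sum _ fun j _ => tendsto_const_nhds.mul (hcoord j)
    have ht2 : Filter.Tendsto (fun n => ‖xx (φ n)‖⁻¹ * ∑ i, b i k) Filter.atTop (nhds 0) := by
      have := (hnorm_tendsto.inv_tendsto_atTop).mul_const (∑ i, b i k)
      simpa using this
    refine le_of_tendsto_of_tendsto' ht1 ht2 fun n => ?_
    have hrow := (hxmem (φ n)).2 k
    have : ∑ j, A k j * z (φ n) j = ‖xx (φ n)‖⁻¹ * ∑ j, A k j * xx (φ n) j := by
      rw [Finset.mul_sum]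
      refine Finset.sum_congr rfl fun j _ => ?_
      simp [hz, Pi.smul_apply, smul_eq_mul]
      ring
    rw [this]
    exact mul_le_mul_of_nonneg_left hrow (inv_nonneg.mpr (norm_nonneg _))
  have hz0norm : ‖z0‖ = 1 := mem_sphere_zero_iff_norm.mp hz0s
  obtain ⟨i₀⟩ := (inferInstance : Nonempty N)
  obtain ⟨x₀, hx₀⟩ := hne i₀
  have hray : ∀ t : ℝ, 0 ≤ t → x₀ + t • z0 ∈ designSpace A b {i₀} := by
    intro t ht
    constructor
    · intro j
      exact add_nonneg (hx₀.1 j) (mul_nonneg ht (hz0nonneg j))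
    · intro k
      have expand : ∑ j, A k j * (x₀ + t • z0) j =
          (∑ j, A k j * x₀ j) + t * ∑ j, A k j * z0 j := by
        rw [Finset.mul_sum, ← Finset.sum_add_distrib]
        refine Finset.sum_congr rfl fun j _ => ?_
        simp [Pi.add_apply, Pi.smul_apply, smul_eq_mul]
        ring
      rw [expand]
      have h1 := hx₀.2 k
      have h2 : t * ∑ j, A k j * z0 j ≤ 0 :=
        mul_nonpos_of_nonneg_of_nonpos ht (hAz k)
      linarith
  obtain ⟨C, hC⟩ := isBounded_iff_forall_norm_le.mp (hbd i₀)
  set t : ℝ := |C| + ‖x₀‖ + 1 with htdef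
  have ht : 0 ≤ t := by positivity
  have hmem := hray t ht
  have hCt := hC _ hmem
  have hnorm_t : ‖t • z0‖ = t := by
    rw [norm_smul, Real.norm_eq_abs, abs_of_nonneg ht, hz0norm, mul_one]
  have : t ≤ ‖x₀ + t • z0‖ + ‖x₀‖ := by
    calc t = ‖t • z0‖ := hnorm_t.symm
    _ = ‖(x₀ + t • z0) - x₀‖ := by congr 1; abel
    _ ≤ ‖x₀ + t • z0‖ + ‖x₀‖ := norm_sub_le _ _
  have habs : C ≤ |C| := le_abs_self C
  linarith

lemma utilitySpace_singleton {K J N : Type*} [Fintype J] [DecidableEq N]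
    (A : K → J → ℝ) (b : N → K → ℝ) (v : N → J → ℝ) (i : N)
    (hne : (designSpace A b {i}).Nonempty)
    (hbd : Bornology.IsBounded (designSpace A b {i})) :
    ∃ m : ℝ, utilitySpace A b v {i} = {u : N → ℝ | u i ≤ m} := by
  have hcompact : IsCompact (designSpace A b ({i} : Finset N)) :=
    Metric.isCompact_of_isClosed_isBounded (designSpace_isClosed A b {i}) hbd
  obtain ⟨x₀, hx₀mem, hx₀max⟩ := hcompact.exists_isMaxOn hne
    (f := fun x => ∑ j, v i j * x j) (by continuity : Continuous fun x : J → ℝ => ∑ j, v i j * x j).continuousOn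
  refine ⟨∑ j, v i j * x₀ j, ?_⟩
  ext u
  simp only [utilitySpace, Set.mem_setOf_eq]
  constructor
  · rintro ⟨x, hx, hux⟩
    exact le_trans (hux i (Finset.mem_singleton_self i)) (hx₀max hx)
  · intro hu
    refine ⟨x₀, hx₀mem, fun i' hi' => ?_⟩
    rw [Finset.mem_singleton] at hi'
    subst hi'
    exact hu

lemma core_bounded {K J N : Type*} [Fintype J] [Fintype K] [Fintype N] [Nonempty N]
    (A : K → J → ℝ) (b : N → K → ℝ) (v : N → J → ℝ)
    (hne : ∀ i : N, (designSpace A b {i}).Nonempty)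
    (hbd : ∀ i : N, Bornology.IsBounded (designSpace A b {i})) :
    Bornology.IsBounded (core A b v) := by
  classical
  obtain ⟨R0, hR0⟩ := isBounded_iff_forall_norm_le.mp (designSpace_univ_bounded A b hne hbd)
  set R := max R0 0 with hRdef
  have hR : ∀ x ∈ designSpace A b (Finset.univ : Finset N), ∀ j, |x j| ≤ R := by
    intro x hx j
    calc |x j| = ‖x j‖ := (Real.norm_eq_abs _).symm
    _ ≤ ‖x‖ := norm_le_pi_norm x j
    _ ≤ R0 := hR0 x hx
    _ ≤ R := le_max_left _ _
  set M : N → ℝ := fun i => ∑ j, |v i j| * R with hMdef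
  have hMi : ∀ u ∈ utilitySpace A b v (Finset.univ : Finset N), ∀ i, u i ≤ M i := by
    rintro u ⟨x, hx, hux⟩ i
    refine le_trans (hux i (Finset.mem_univ i)) ?_
    refine Finset.sum_le_sum fun j _ => ?_
    calc v i j * x j ≤ |v i j * x j| := le_abs_self _
    _ = |v i j| * |x j| := abs_mul _ _
    _ ≤ |v i j| * R := mul_le_mul_of_nonneg_left (hR x hx j) (abs_nonneg _)
  choose m hm using fun i => utilitySpace_singleton A b v i (hne i) (hbd i)
  have hlow : ∀ u ∈ core A b v, ∀ i, m i ≤ u i := by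
    intro u hu i
    by_contra hlt
    push_neg at hlt
    apply hu.2
    refine Set.mem_iUnion.mpr ⟨{i}, Set.mem_iUnion.mpr ⟨Finset.singleton_nonempty i, ?_⟩⟩
    have hopen : IsOpen {w : N → ℝ | w i < m i} :=
      isOpen_lt (continuous_apply i) continuous_const
    have hsub : {w : N → ℝ | w i < m i} ⊆ utilitySpace A b v {i} := by
      rw [hm i]; exact fun w hw => Set.mem_setOf_eq ▸ le_of_lt hw
    exact interior_maximal hsub hopen hlt
  set C := Finset.univ.sup' Finset.univ_nonempty (fun i : N => |m i| + |M i|) with hCdef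
  have hC0 : 0 ≤ C := by
    obtain ⟨i⟩ := (inferInstance : Nonempty N)
    have := Finset.le_sup' (fun i : N => |m i| + |M i|) (Finset.mem_univ i)
    have h0 : (0:ℝ) ≤ |m i| + |M i| := by positivity
    exact le_trans h0 this
  rw [isBounded_iff_forall_norm_le]
  refine ⟨C, fun u hu => ?_⟩
  rw [pi_norm_le_iff_of_nonneg hC0]
  intro i
  have h1 := hlow u hu i
  have h2 := hMi u hu.1 i
  have h3 : |m i| + |M i| ≤ C := Finset.le_sup' (fun i : N => |m i| + |M i|) (Finset.mem_univ i)
  rw [Real.norm_eq_abs, abs_le]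
  constructor
  · have := neg_abs_le (m i)
    have := abs_nonneg (M i)
    linarith
  · have := le_abs_self (M i)
    have := abs_nonneg (m i)
    linarith

lemma iInter_iUnion_choice {α ι : Type*} {κ : ι → Type*} (s : ∀ i, κ i → Set α) :
    ⋂ i, ⋃ j, s i j = ⋃ f : ∀ i, κ i, ⋂ i, s i (f i) := by
  ext x
  simp only [Set.mem_iInter, Set.mem_iUnion]
  constructor
  · intro h
    exact Classical.skolem.mp h
  · rintro ⟨f, hf⟩ i
    exact ⟨f i, hf i⟩

set_option maxHeartbeats 2000000

/-- If each `X({i})` is nonempty and bounded and the core is nonempty, then the core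
is the union of a finite family of polytopes (bounded sets of the form `{u : Cu ≤ d}`);
in particular it is MIP-representable. -/
theorem ntulp_core_finite_union_of_polytopes {K J N : Type*}
    [Fintype J] [Fintype K] [Fintype N] [Nonempty N]
    (A : K → J → ℝ) (b : N → K → ℝ) (v : N → J → ℝ)
    (hne : ∀ i : N, (designSpace A b {i}).Nonempty)
    (hbd : ∀ i : N, Bornology.IsBounded (designSpace A b {i}))
    (hcore : (core A b v).Nonempty) :
    ∃ (p : ℕ) (P : Fin p → Set (N → ℝ)),
      (∀ t : Fin p,
        (∃ (q : ℕ) (C : Fin q → N → ℝ) (d : Fin q → ℝ),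
          P t = {u : N → ℝ | ∀ l, ∑ i, C l i * u i ≤ d l}) ∧
        Bornology.IsBounded (P t)) ∧
      core A b v = ⋃ t : Fin p, P t := by
  classical
  have hdesc : ∀ S : Finset N, ∃ (q : ℕ) (c : Fin q → N → ℝ) (d : Fin q → ℝ),
      utilitySpace A b v S = polySet c d ∧ ∀ l, c l ≠ 0 ∨ d l < 0 := by
    intro S
    obtain ⟨q, c, d, hP⟩ := utilitySpace_isPolyh A b v S
    obtain ⟨q', c', d', heq, hrows⟩ := polySet_prune c d
    exact ⟨q', c', d', hP.trans heq, hrows⟩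
  choose qS cS dS hUS hrowsS using hdesc
  obtain ⟨q₀, c₀, d₀, hU⟩ := utilitySpace_isPolyh A b v (Finset.univ : Finset N)
  have hcompl : ∀ S : Finset N, (interior (utilitySpace A b v S))ᶜ =
      ⋃ l : Fin (qS S), {u : N → ℝ | dS S l ≤ ∑ i, cS S l i * u i} := by
    intro S
    rw [hUS S]
    exact compl_interior_polySet _ _ (hrowsS S)
  have hcore_eq : core A b v = utilitySpace A b v Finset.univ ∩
      ⋂ S : {S : Finset N // S.Nonempty}, ⋃ l : Fin (qS S.1),
        {u : N → ℝ | dS S.1 l ≤ ∑ i, cS S.1 l i * u i} := by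
    unfold core
    ext u
    simp only [Set.mem_diff, Set.mem_inter_iff, Set.mem_iInter, Set.mem_iUnion, not_exists,
      Set.mem_setOf_eq]
    refine and_congr_right fun _ => ?_
    constructor
    · intro h S
      have h2 : u ∉ interior (utilitySpace A b v S.1) := fun hmem => h S.1 S.2 hmem
      have h3 : u ∈ (interior (utilitySpace A b v S.1))ᶜ := h2
      rw [hcompl S.1] at h3
      obtain ⟨l, hl⟩ := Set.mem_iUnion.mp h3
      exact ⟨l, hl⟩
    · intro h S hS hmem
      obtain ⟨l, hl⟩ := h ⟨S, hS⟩
      have h3 : u ∈ (interior (utilitySpace A b v S))ᶜ := by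
        rw [hcompl S]
        exact Set.mem_iUnion.mpr ⟨l, hl⟩
      exact h3 hmem
  have hdistrib : core A b v =
      ⋃ f : (∀ S : {S : Finset N // S.Nonempty}, Fin (qS S.1)),
        (utilitySpace A b v Finset.univ ∩
          ⋂ S : {S : Finset N // S.Nonempty},
            {u : N → ℝ | dS S.1 (f S) ≤ ∑ i, cS S.1 (f S) i * u i}) := by
    rw [hcore_eq,
      iInter_iUnion_choice (fun (S : {S : Finset N // S.Nonempty}) (l : Fin (qS S.1)) =>
        {u : N → ℝ | dS S.1 l ≤ ∑ i, cS S.1 l i * u i}),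
      Set.inter_iUnion]
  set F := ∀ S : {S : Finset N // S.Nonempty}, Fin (qS S.1) with hF
  set e : Fin (Fintype.card F) ≃ F := (Fintype.equivFin F).symm with he
  refine ⟨Fintype.card F, fun t =>
      utilitySpace A b v Finset.univ ∩
        ⋂ S : {S : Finset N // S.Nonempty},
          {u : N → ℝ | dS S.1 (e t S) ≤ ∑ i, cS S.1 (e t S) i * u i},
    fun t => ⟨?_, ?_⟩, ?_⟩
  · -- polytope description of the piece
    set c1 : (Fin q₀ ⊕ {S : Finset N // S.Nonempty}) → N → ℝ :=
      Sum.elim c₀ (fun S i => -(cS S.1 (e t S) i)) with hc1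
    set d1 : (Fin q₀ ⊕ {S : Finset N // S.Nonempty}) → ℝ :=
      Sum.elim d₀ (fun S => -(dS S.1 (e t S))) with hd1
    have hPf : utilitySpace A b v Finset.univ ∩
        ⋂ S : {S : Finset N // S.Nonempty},
          {u : N → ℝ | dS S.1 (e t S) ≤ ∑ i, cS S.1 (e t S) i * u i} =
        {u : N → ℝ | ∀ l : Fin q₀ ⊕ {S : Finset N // S.Nonempty}, ∑ i, c1 l i * u i ≤ d1 l} := by
      ext u
      simp only [Set.mem_inter_iff, Set.mem_iInter, Set.mem_setOf_eq, hU, polySet]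
      constructor
      · rintro ⟨h0, hS⟩ l
        rcases l with l | S
        · simpa [hc1, hd1] using h0 l
        · have := hS S
          simp only [hc1, hd1, Sum.elim_inr, neg_mul, Finset.sum_neg_distrib]
          linarith
      · intro h
        constructor
        · intro l
          simpa [hc1, hd1] using h (Sum.inl l)
        · intro S
          have := h (Sum.inr S)
          simp only [hc1, hd1, Sum.elim_inr, neg_mul, Finset.sum_neg_distrib] at this
          linarith
    obtain ⟨q, C, d, hpoly⟩ := isPolyh_reindex c1 d1
    exact ⟨q, C, d, hPf.trans hpoly⟩
  · -- boundedness of the piece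
    have hsub : utilitySpace A b v Finset.univ ∩
        ⋂ S : {S : Finset N // S.Nonempty},
          {u : N → ℝ | dS S.1 (e t S) ≤ ∑ i, cS S.1 (e t S) i * u i} ⊆ core A b v := by
      intro u hu
      rw [hcore_eq]
      refine ⟨hu.1, Set.mem_iInter.mpr fun S => Set.mem_iUnion.mpr ⟨e t S, ?_⟩⟩
      exact Set.mem_iInter.mp hu.2 S
    exact (core_bounded A b v hne hbd).subset hsub
  · -- the union
    rw [hdistrib]
    ext u
    simp only [Set.mem_iUnion]
    constructor
    · rintro ⟨f, hf⟩
      refine ⟨e.symm f, ?_⟩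
      rw [Equiv.apply_symm_apply]
      exact hf
    · rintro ⟨t, ht⟩
      exact ⟨e t, ht⟩
end

section
/- In the 3DM-gadget NTU LP game, there exists a blocking coalition S ⊆ H ∪ T against the all-ones utility vector u* (i.e., a nonempty S and x ∈ ℝ^{m+1} with x ≥ 0, Σ_{j=1}^{m+1} x_j ≤ |S|, and (v^i)ᵀ x > 1 for all i ∈ S) if and only if the hypergraph (H, T) contains a three-dimensional perfect matching, i.e., a subcollection T' ⊆ T of n edges such that each node h ∈ H is contained in exactly one edge of T'. -/
/-!
Write `t = 1 - x₀/(3n+m)` for what each member of a blocking coalition `S` must gain from edge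
goods beyond the extra good `x₀`. The budget then caps the total edge mass `y` by `t|S|`. An edge
player needs more than `(4n-1)t/n` of its own good, and a node player, valuing edge goods at
most `1/(4n-1)`, forces `|S| ≥ 4n`; together these leave room for at most `n` edge players, so
`S` consists of all `3n` nodes and exactly `n` edges, and `y ≤ 4nt`. A node values non-incident
goods at slightly less than `1/(4n)`, so it must get more than `t` from incident edges, whereas
the `n` edges of `S` absorb at least `(4n-1)t`, leaving at most `t` elsewhere: every node lies
on an edge of `S`, and `n` triples covering `3n` nodes form a perfect matching. Conversely, four
units on each edge of a perfect matching block `u*`.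
-/

open Finset

/-- Membership of a node in a (hyper)edge given as a triple. -/
def memEdge {V : Type*} (h : V) (t : V × V × V) : Prop :=
  h = t.1 ∨ h = t.2.1 ∨ h = t.2.2

instance {V : Type*} [DecidableEq V] (h : V) (t : V × V × V) : Decidable (memEdge h t) := by
  unfold memEdge; infer_instance

/-- The valuations in the 3DM-gadget NTU LP game.  Players are node players
(elements of `Hset`) or edge players (indices `Fin m` of edges `T`); goods are the
`m` edge goods together with one extra good. -/
noncomputable def gadgetVal {V : Type*} [DecidableEq V] (n m : ℕ)
    (Hset : Finset V) (T : Fin m → V × V × V) :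
    ({h : V // h ∈ Hset} ⊕ Fin m) → (Fin m ⊕ Unit) → ℝ
  | Sum.inl h, Sum.inl j =>
      if memEdge h.1 (T j) then 1 / (4 * (n : ℝ) - 1)
      else (1 / (4 * (n : ℝ))) * (1 - 1 / (2 * ((n : ℝ) - 1) * (4 * (n : ℝ) - 1)))
  | Sum.inl _, Sum.inr _ => 1 / (3 * (n : ℝ) + (m : ℝ))
  | Sum.inr e, Sum.inl j => if j = e then (n : ℝ) / (4 * (n : ℝ) - 1) else 0
  | Sum.inr _, Sum.inr _ => 1 / (3 * (n : ℝ) + (m : ℝ))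

/-- A coalition `S` of the 3DM-gadget game blocks the all-ones utility vector `u*`
if some `x ∈ X(S)` (i.e. `x ≥ 0` with `∑ⱼ xⱼ ≤ |S|`) gives every member of `S`
utility strictly greater than `1`. -/
noncomputable def blocksAllOnes {V : Type*} [DecidableEq V] (n m : ℕ)
    (Hset : Finset V) (T : Fin m → V × V × V)
    (S : Finset ({h : V // h ∈ Hset} ⊕ Fin m)) : Prop :=
  ∃ x : Fin m ⊕ Unit → ℝ, (∀ j, 0 ≤ x j) ∧ (∑ j, x j) ≤ (S.card : ℝ) ∧
    ∀ i ∈ S, (1 : ℝ) < ∑ j, gadgetVal n m Hset T i j * x j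

theorem Finset.existsUnique_of_forall_exists_of_sum_card_le {α β : Type*} (r : α → β → Prop)
    [∀ a b, Decidable (r a b)] {s : Finset α} {t : Finset β} (hcover : ∀ a ∈ s, ∃ b ∈ t, r a b)
    (hsum : ∑ b ∈ t, #(s.bipartiteBelow r b) ≤ #s) : ∀ a ∈ s, ∃! b, b ∈ t ∧ r a b := by
  have hpos : ∀ a ∈ s, 1 ≤ #(t.bipartiteAbove r a) := fun a ha =>
    let ⟨b, hb, hab⟩ := hcover a ha
    card_pos.2 ⟨b, (mem_bipartiteAbove r).2 ⟨hb, hab⟩⟩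
  have hle : ∑ a ∈ s, #(t.bipartiteAbove r a) ≤ ∑ _a ∈ s, 1 := by
    rwa [sum_card_bipartiteAbove_eq_sum_card_bipartiteBelow, ← card_eq_sum_ones]
  have hone := (sum_eq_sum_iff_of_le hpos).1 (le_antisymm (sum_le_sum hpos) hle)
  intro a ha
  simpa using card_eq_one_iff_existsUnique.1 (hone a ha).symm

namespace Gadget

-- The values in `gadgetVal` of an edge good to an incident and to a non-incident node, and of
-- the extra good.
noncomputable def incVal (n : ℝ) : ℝ := 1 / (4 * n - 1)

noncomputable def deficit (n : ℝ) : ℝ := 1 / (2 * (n - 1) * (4 * n - 1))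

noncomputable def nonIncVal (n : ℝ) : ℝ := 1 / (4 * n) * (1 - deficit n)

noncomputable def extraVal (n m : ℝ) : ℝ := 1 / (3 * n + m)

section Constants

variable {n : ℝ}

lemma incVal_pos (hn : 1 < n) : 0 < incVal n :=
  one_div_pos.2 (by linarith)

lemma incVal_mul_four_mul_sub_one (hn : 1 < n) : incVal n * (4 * n - 1) = 1 :=
  one_div_mul_cancel (by linarith)

lemma four_mul_mul_nonIncVal (hn : n ≠ 0) : 4 * n * nonIncVal n = 1 - deficit n := by
  unfold nonIncVal
  field_simp

lemma nonIncVal_nonneg (hn : 2 ≤ n) : 0 ≤ nonIncVal n := by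
  have hδ : deficit n ≤ 1 := by
    unfold deficit
    rw [div_le_one (by nlinarith)]
    nlinarith
  unfold nonIncVal
  have : 0 < 4 * n := by linarith
  have : 0 ≤ 1 - deficit n := by linarith
  positivity

lemma incVal_sub_nonIncVal_eq (hn : 1 < n) :
    incVal n - nonIncVal n = (2 * n - 1) / (8 * n * (n - 1) * (4 * n - 1)) := by
  unfold incVal nonIncVal deficit
  have : n - 1 ≠ 0 := by linarith
  have : 4 * n - 1 ≠ 0 := by linarith
  have : n ≠ 0 := by linarith
  field_simp
  ring

lemma deficit_eq (hn : 1 < n) : deficit n = 4 * n / (8 * n * (n - 1) * (4 * n - 1)) := by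
  unfold deficit
  have : n ≠ 0 := by linarith
  field_simp
  ring

lemma denom_pos (hn : 1 < n) : 0 < 8 * n * (n - 1) * (4 * n - 1) :=
  mul_pos (mul_pos (by linarith) (by linarith)) (by linarith)

lemma nonIncVal_lt_incVal (hn : 1 < n) : nonIncVal n < incVal n := by
  rw [← sub_pos, incVal_sub_nonIncVal_eq hn]
  exact div_pos (by linarith) (denom_pos hn)

lemma incVal_sub_nonIncVal_lt_deficit (hn : 1 < n) : incVal n - nonIncVal n < deficit n := by
  rw [incVal_sub_nonIncVal_eq hn, deficit_eq hn, div_lt_div_iff_of_pos_right (denom_pos hn)]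
  linarith

lemma one_lt_four_mul_incVal_add (hn : 1 < n) :
    1 < 4 * incVal n + 4 * (n - 1) * nonIncVal n := by
  have key : 4 * incVal n + 4 * (n - 1) * nonIncVal n = 1 + 1 / (2 * n * (4 * n - 1)) := by
    unfold incVal nonIncVal deficit
    have : n - 1 ≠ 0 := by linarith
    have : 4 * n - 1 ≠ 0 := by linarith
    have : n ≠ 0 := by linarith
    field_simp
    ring
  rw [key, lt_add_iff_pos_right]
  have : 0 < 4 * n - 1 := by linarith
  have : 0 < n := by linarith
  positivity

end Constants

lemma extraVal_mul_card_le_one {V : Type*} {n m : ℕ} {H : Finset V} (hH : H.card ≤ 3 * n)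
    (S : Finset ({v : V // v ∈ H} ⊕ Fin m)) :
    extraVal n m * S.card ≤ 1 := by
  have hS : (S.card : ℝ) ≤ 3 * n + m := by
    have := S.card_le_univ
    rw [Fintype.card_sum, Fintype.card_coe, Fintype.card_fin] at this
    exact_mod_cast this.trans (by omega)
  rw [extraVal, one_div_mul_eq_div]
  exact div_le_one_of_le₀ hS (by positivity)

section Game

variable {V : Type*} [DecidableEq V] {n m : ℕ} {H : Finset V} {T : Fin m → V × V × V}
  {S : Finset ({v : V // v ∈ H} ⊕ Fin m)} {x : Fin m ⊕ Unit → ℝ}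

def edgeMass (x : Fin m ⊕ Unit → ℝ) : ℝ := ∑ j, x (Sum.inl j)

def incidentMass (T : Fin m → V × V × V) (v : V) (x : Fin m ⊕ Unit → ℝ) : ℝ :=
  ∑ j with memEdge v (T j), x (Sum.inl j)

/-- What every member of a blocking coalition must still gain from the edge goods, once the extra
good is counted. -/
noncomputable def slack (n m : ℕ) (x : Fin m ⊕ Unit → ℝ) : ℝ :=
  1 - extraVal n m * x (Sum.inr ())

lemma one_lt_utility_inl_iff (x : Fin m ⊕ Unit → ℝ) (h : {v : V // v ∈ H}) :
    1 < ∑ j, gadgetVal n m H T (Sum.inl h) j * x j ↔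
      slack n m x < nonIncVal n * edgeMass x + (incVal n - nonIncVal n) * incidentMass T h x := by
  have hsplit : ∀ j, gadgetVal n m H T (Sum.inl h) (Sum.inl j) * x (Sum.inl j) =
      nonIncVal n * x (Sum.inl j) +
        (incVal n - nonIncVal n) * if memEdge h.1 (T j) then x (Sum.inl j) else 0 := by
    intro j
    simp only [gadgetVal, incVal, nonIncVal, deficit]
    split_ifs <;> ring
  rw [Fintype.sum_sum_type, Finset.sum_congr rfl fun j _ => hsplit j, Finset.sum_add_distrib,
    ← Finset.mul_sum, ← Finset.mul_sum, ← Finset.sum_filter, slack]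
  simp only [gadgetVal, edgeMass, incidentMass, extraVal, Fintype.univ_unit, Finset.sum_singleton]
  constructor <;> intro h <;> linarith

lemma one_lt_utility_inr_iff (x : Fin m ⊕ Unit → ℝ) (e : Fin m) :
    1 < ∑ j, gadgetVal n m H T (Sum.inr e) j * x j ↔
      slack n m x < n * incVal n * x (Sum.inl e) := by
  simp only [Fintype.sum_sum_type, gadgetVal, ite_mul, zero_mul, Finset.sum_ite_eq',
    Finset.mem_univ, if_true, Fintype.univ_unit, Finset.sum_singleton, slack, extraVal, incVal,
    mul_one_div]
  constructor <;> intro h <;> linarith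

lemma card_filter_memEdge_le_three (s : Finset V) (t : V × V × V) :
    #{v ∈ s | memEdge v t} ≤ 3 := by
  refine (card_le_card fun v hv => ?_).trans (card_le_three (a := t.1) (b := t.2.1) (c := t.2.2))
  simpa [memEdge] using (mem_filter.1 hv).2

structure IsBlockingAllocation (n m : ℕ) (H : Finset V) (T : Fin m → V × V × V)
    (S : Finset ({v : V // v ∈ H} ⊕ Fin m)) (x : Fin m ⊕ Unit → ℝ) : Prop where
  nonneg : ∀ j, 0 ≤ x j
  sum_le_card : ∑ j, x j ≤ S.card
  one_lt_utility : ∀ i ∈ S, 1 < ∑ j, gadgetVal n m H T i j * x j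

lemma blocksAllOnes_iff :
    blocksAllOnes n m H T S ↔ ∃ x, IsBlockingAllocation n m H T S x :=
  ⟨fun ⟨x, h0, hS, hu⟩ => ⟨x, h0, hS, hu⟩, fun ⟨x, ⟨h0, hS, hu⟩⟩ => ⟨x, h0, hS, hu⟩⟩

lemma edgeMass_nonneg (h0 : ∀ j, 0 ≤ x j) : 0 ≤ edgeMass x :=
  sum_nonneg fun _ _ => h0 _

lemma incidentMass_le_edgeMass (h0 : ∀ j, 0 ≤ x j) (v : V) : incidentMass T v x ≤ edgeMass x :=
  sum_le_univ_sum_of_nonneg fun _ => h0 _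

namespace IsBlockingAllocation

lemma edgeMass_add_le_card (hx : IsBlockingAllocation n m H T S x) :
    edgeMass x + x (Sum.inr ()) ≤ S.card := by
  simpa [Fintype.sum_sum_type, edgeMass] using hx.sum_le_card

lemma slack_nonneg (hH : H.card ≤ 3 * n) (hx : IsBlockingAllocation n m H T S x) :
    0 ≤ slack n m x := by
  have hz := hx.edgeMass_add_le_card
  have hq := extraVal_mul_card_le_one hH S
  have : extraVal n m * x (Sum.inr ()) ≤ extraVal n m * S.card :=
    mul_le_mul_of_nonneg_left (by linarith [edgeMass_nonneg hx.nonneg])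
      (by unfold extraVal; positivity)
  unfold slack
  linarith

/-- A unit of the extra good is worth at most `1/|S|` to every player, so buying it costs the
coalition at least as much as it gains. -/
lemma edgeMass_le_slack_mul_card (hH : H.card ≤ 3 * n) (hx : IsBlockingAllocation n m H T S x) :
    edgeMass x ≤ slack n m x * S.card := by
  have hz := hx.edgeMass_add_le_card
  have hq := extraVal_mul_card_le_one hH S
  have : extraVal n m * S.card * x (Sum.inr ()) ≤ x (Sum.inr ()) :=
    mul_le_of_le_one_left (hx.nonneg _) hq
  unfold slack
  linarith

lemma slack_lt_of_inl_mem (hx : IsBlockingAllocation n m H T S x) {h : {v : V // v ∈ H}}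
    (hh : Sum.inl h ∈ S) :
    slack n m x < nonIncVal n * edgeMass x + (incVal n - nonIncVal n) * incidentMass T h x :=
  (one_lt_utility_inl_iff x h).1 (hx.one_lt_utility _ hh)

lemma slack_lt_incVal_mul_edgeMass (hn : 1 < n) (hx : IsBlockingAllocation n m H T S x)
    {h : {v : V // v ∈ H}} (hh : Sum.inl h ∈ S) :
    slack n m x < incVal n * edgeMass x := by
  have := mul_le_mul_of_nonneg_left (incidentMass_le_edgeMass hx.nonneg (T := T) h)
    (sub_nonneg.2 (nonIncVal_lt_incVal (n := (n : ℝ)) (by exact_mod_cast hn)).le)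
  linarith [hx.slack_lt_of_inl_mem hh]

lemma four_mul_sub_one_mul_slack_lt (hn : 1 < n) (hx : IsBlockingAllocation n m H T S x)
    {e : Fin m} (he : Sum.inr e ∈ S) :
    (4 * n - 1) * slack n m x < n * x (Sum.inl e) := by
  have h := (one_lt_utility_inr_iff x e).1 (hx.one_lt_utility _ he)
  have h4 : (0 : ℝ) < 4 * n - 1 := by
    have : (1 : ℝ) < n := by exact_mod_cast hn
    linarith
  calc (4 * n - 1) * slack n m x < (4 * n - 1) * (n * incVal n * x (Sum.inl e)) :=
        mul_lt_mul_of_pos_left h h4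
    _ = n * x (Sum.inl e) := by
        linear_combination (n * x (Sum.inl e)) *
          incVal_mul_four_mul_sub_one (n := (n : ℝ)) (by exact_mod_cast hn)

lemma slack_pos (hn : 1 < n) (hH : H.card ≤ 3 * n) (hx : IsBlockingAllocation n m H T S x)
    (hS : S.Nonempty) : 0 < slack n m x := by
  have hn' : (1 : ℝ) < n := by exact_mod_cast hn
  have ht := hx.slack_nonneg hH
  have hy := hx.edgeMass_le_slack_mul_card hH
  refine ht.lt_of_ne fun ht0 => ?_
  rw [← ht0, zero_mul] at hy
  obtain ⟨i | e, hi⟩ := hS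
  · have := hx.slack_lt_incVal_mul_edgeMass hn hi
    nlinarith [incVal_pos hn']
  · have := hx.four_mul_sub_one_mul_slack_lt hn hi
    have : x (Sum.inl e) ≤ edgeMass x :=
      single_le_sum (fun j _ => hx.nonneg (Sum.inl j)) (mem_univ e)
    nlinarith

lemma card_toRight_mul_le_sum (hn : 1 < n) (hx : IsBlockingAllocation n m H T S x) :
    S.toRight.card * ((4 * n - 1) * slack n m x) ≤ n * ∑ e ∈ S.toRight, x (Sum.inl e) := by
  rw [mul_sum, ← nsmul_eq_mul]
  exact card_nsmul_le_sum _ _ _ fun e he =>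
    (hx.four_mul_sub_one_mul_slack_lt hn (mem_toRight.1 he)).le

lemma sum_toRight_le_edgeMass (hx : IsBlockingAllocation n m H T S x) :
    ∑ e ∈ S.toRight, x (Sum.inl e) ≤ edgeMass x :=
  sum_le_univ_sum_of_nonneg fun _ => hx.nonneg _

lemma card_toRight_mul_le (hn : 1 < n) (hH : H.card ≤ 3 * n)
    (hx : IsBlockingAllocation n m H T S x) (hS : S.Nonempty) :
    S.toRight.card * (4 * n - 1) ≤ (n * S.card : ℝ) := by
  have ht := hx.slack_pos hn hH hS
  have h1 := hx.card_toRight_mul_le_sum hn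
  have h2 := mul_le_mul_of_nonneg_left
    (hx.sum_toRight_le_edgeMass.trans (hx.edgeMass_le_slack_mul_card hH)) (Nat.cast_nonneg n)
  refine le_of_mul_le_mul_right ?_ ht
  linarith

lemma four_mul_sub_one_lt_card (hn : 1 < n) (hH : H.card ≤ 3 * n)
    (hx : IsBlockingAllocation n m H T S x) {h : {v : V // v ∈ H}} (hh : Sum.inl h ∈ S) :
    4 * n - 1 < (S.card : ℝ) := by
  have ht := hx.slack_pos hn hH ⟨_, hh⟩
  have h1 := hx.slack_lt_incVal_mul_edgeMass hn hh
  have h2 := mul_le_mul_of_nonneg_left (hx.edgeMass_le_slack_mul_card hH)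
    (incVal_pos (n := (n : ℝ)) (by exact_mod_cast hn)).le
  have h3 : 1 < incVal n * S.card := by nlinarith
  have h4 : (0 : ℝ) < 4 * n - 1 := by
    have : (1 : ℝ) < n := by exact_mod_cast hn
    linarith
  rwa [incVal, one_div_mul_eq_div, one_lt_div h4] at h3

/-- Edge players demand so much that at most `n` of them fit next to the `3n` node players,
while the node players need a coalition of size at least `4n`. -/
lemma card_toLeft_eq_and_card_toRight_eq (hn : 1 < n) (hH : H.card ≤ 3 * n)
    (hx : IsBlockingAllocation n m H T S x) (hS : S.Nonempty) :
    S.toLeft.card = 3 * n ∧ S.toRight.card = n := by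
  have hcard := S.card_toLeft_add_card_toRight
  have hA : S.toLeft.card ≤ 3 * n :=
    (S.toLeft.card_le_univ.trans_eq (Fintype.card_coe H)).trans hH
  have hE : S.toRight.card * (4 * n) ≤ n * S.card + S.toRight.card := by
    have := hx.card_toRight_mul_le hn hH hS
    exact_mod_cast (by linarith : (S.toRight.card : ℝ) * (4 * n) ≤ n * S.card + S.toRight.card)
  obtain ⟨h, hh⟩ : S.toLeft.Nonempty := by
    by_contra hA0
    rw [not_nonempty_iff_eq_empty] at hA0
    rw [hA0, card_empty, zero_add] at hcard
    have : 0 < S.card := card_pos.2 hS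
    nlinarith
  have h4 : 4 * n < S.card + 1 := by
    have := hx.four_mul_sub_one_lt_card hn hH (mem_toLeft.1 hh)
    exact_mod_cast (by linarith : (4 * n : ℝ) < S.card + 1)
  constructor <;> nlinarith

/-- Once `|S| = 4n`, a node cannot reach its target from non-incident goods alone: spreading the
whole budget over them falls short by the `deficit`. -/
lemma slack_lt_incidentMass (hn : 1 < n) (hH : H.card ≤ 3 * n)
    (hx : IsBlockingAllocation n m H T S x) (hS : S.card = 4 * n) {h : {v : V // v ∈ H}}
    (hh : Sum.inl h ∈ S) : slack n m x < incidentMass T h x := by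
  have hn' : (1 : ℝ) < n := by exact_mod_cast hn
  have ht := hx.slack_pos hn hH ⟨_, hh⟩
  have hy : edgeMass x ≤ 4 * n * slack n m x := by
    have := hx.edgeMass_le_slack_mul_card hH
    rw [hS] at this
    push_cast at this
    linarith
  have hc := mul_le_mul_of_nonneg_left hy (nonIncVal_nonneg (n := (n : ℝ)) (by exact_mod_cast hn))
  have h4c := four_mul_mul_nonIncVal (n := (n : ℝ)) (by positivity)
  have hgap := incVal_sub_nonIncVal_lt_deficit hn'
  have hpos := sub_pos.2 (nonIncVal_lt_incVal hn')
  have hlt := hx.slack_lt_of_inl_mem hh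
  by_contra! hW
  nlinarith [mul_le_mul_of_nonneg_left hW hpos.le]

lemma exists_mem_toRight_memEdge (hn : 1 < n) (hH : H.card ≤ 3 * n)
    (hx : IsBlockingAllocation n m H T S x) (hS : S.card = 4 * n) (hE : S.toRight.card = n)
    {h : {v : V // v ∈ H}} (hh : Sum.inl h ∈ S) : ∃ e ∈ S.toRight, memEdge h.1 (T e) := by
  by_contra! hno
  have hdisj : Disjoint ({j | memEdge h.1 (T j)} : Finset (Fin m)) S.toRight :=
    disjoint_left.2 fun e he he' => hno e he' (mem_filter.1 he).2
  have hsum : incidentMass T h x + ∑ e ∈ S.toRight, x (Sum.inl e) ≤ edgeMass x := by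
    rw [incidentMass, ← sum_union hdisj]
    exact sum_le_univ_sum_of_nonneg fun _ => hx.nonneg _
  have hmass := hx.card_toRight_mul_le_sum hn
  rw [hE] at hmass
  have hy := hx.edgeMass_le_slack_mul_card hH
  rw [hS] at hy
  push_cast at hy
  have hW := hx.slack_lt_incidentMass hn hH hS hh
  have hn0 : (0 : ℝ) < n := by positivity
  nlinarith

theorem exists_perfectMatching (hn : 1 < n) (hH : H.card = 3 * n)
    (hx : IsBlockingAllocation n m H T S x) (hS : S.Nonempty) :
    ∃ T' : Finset (Fin m), T'.card = n ∧ ∀ h ∈ H, ∃! e, e ∈ T' ∧ memEdge h (T e) := by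
  obtain ⟨hA, hE⟩ := hx.card_toLeft_eq_and_card_toRight_eq hn hH.le hS
  have hS4 : S.card = 4 * n := by rw [← S.card_toLeft_add_card_toRight, hA, hE]; ring
  have hmem : ∀ h, Sum.inl h ∈ S := fun h => by
    rw [← mem_toLeft, eq_univ_of_card S.toLeft (by simp [hA, hH])]
    exact mem_univ h
  refine ⟨S.toRight, hE, existsUnique_of_forall_exists_of_sum_card_le _
    (fun v hv => hx.exists_mem_toRight_memEdge hn hH.le hS4 hE (hmem ⟨v, hv⟩)) ?_⟩
  calc ∑ e ∈ S.toRight, #(H.bipartiteBelow (fun v e => memEdge v (T e)) e)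
      ≤ ∑ _e ∈ S.toRight, 3 := sum_le_sum fun e _ => card_filter_memEdge_le_three H (T e)
    _ = #H := by rw [sum_const, hE, hH, smul_eq_mul, mul_comm]

end IsBlockingAllocation

/-- Four units on each matching edge: a node values the `4` units on its own edge at `4/(4n-1)` and
the `4(n-1)` others at slightly less than `1/(4n)` each, which still adds up to more than `1`. -/
lemma blocksAllOnes_of_perfectMatching (hn : 1 < n) (hH : H.card = 3 * n) {T' : Finset (Fin m)}
    (hT'card : T'.card = n) (hT' : ∀ h ∈ H, ∃! e, e ∈ T' ∧ memEdge h (T e)) :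
    blocksAllOnes n m H T (univ.disjSum T') := by
  have hn' : (1 : ℝ) < n := by exact_mod_cast hn
  set x : Fin m ⊕ Unit → ℝ := Sum.elim (fun e => if e ∈ T' then 4 else 0) 0
  have hslack : slack n m x = 1 := by simp [slack, x]
  have hmass : edgeMass x = 4 * n := by simp [edgeMass, x, sum_ite_mem, hT'card, mul_comm]
  have hinc (h : {v : V // v ∈ H}) : incidentMass T h x = 4 := by
    have : #(({j | memEdge h.1 (T j)} : Finset (Fin m)) ∩ T') = 1 :=
      card_eq_one_iff_existsUnique.2 (by simpa [and_comm] using hT' h.1 h.2)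
    simp [incidentMass, x, sum_ite_mem, this]
  refine blocksAllOnes_iff.2 ⟨x, ⟨?_, ?_, ?_⟩⟩
  · rintro (e | u)
    · by_cases he : e ∈ T' <;> simp [x, he]
    · simp [x]
  · have : ∑ j, x j = edgeMass x := by simp [Fintype.sum_sum_type, edgeMass, x]
    rw [this, hmass, card_disjSum, card_univ, Fintype.card_coe, hH, hT'card]
    push_cast
    linarith
  · rintro (h | e) hi
    · rw [one_lt_utility_inl_iff, hslack, hmass, hinc]
      linarith [one_lt_four_mul_incVal_add hn']
    · rw [one_lt_utility_inr_iff, hslack]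
      simp only [x, Sum.elim_inl, if_pos (inr_mem_disjSum.1 hi)]
      linarith [incVal_mul_four_mul_sub_one hn', incVal_pos hn']

end Game

end Gadget

theorem gadget_blocking_iff_3dm_general {V : Type*} [DecidableEq V] (n m : ℕ)
    (hn : 1 < n)
    (Xs Ys Zs : Finset V) (hX : Xs.card = n) (hY : Ys.card = n) (hZ : Zs.card = n)
    (hXY : Disjoint Xs Ys) (hXZ : Disjoint Xs Zs) (hYZ : Disjoint Ys Zs)
    (T : Fin m → V × V × V) :
    (∃ S : Finset ({h : V // h ∈ Xs ∪ Ys ∪ Zs} ⊕ Fin m),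
        S.Nonempty ∧ blocksAllOnes n m (Xs ∪ Ys ∪ Zs) T S) ↔
      (∃ T' : Finset (Fin m), T'.card = n ∧
        ∀ h ∈ Xs ∪ Ys ∪ Zs, ∃! e : Fin m, e ∈ T' ∧ memEdge h (T e)) := by
  have hH : (Xs ∪ Ys ∪ Zs).card = 3 * n := by
    rw [card_union_of_disjoint (disjoint_union_left.2 ⟨hXZ, hYZ⟩), card_union_of_disjoint hXY]
    omega
  constructor
  · rintro ⟨S, hS, hblock⟩
    obtain ⟨x, hx⟩ := Gadget.blocksAllOnes_iff.1 hblock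
    exact hx.exists_perfectMatching hn hH hS
  · rintro ⟨T', hT'card, hT'⟩
    obtain ⟨e, he⟩ : T'.Nonempty := card_pos.1 (by omega)
    exact ⟨_, ⟨_, inr_mem_disjSum.2 he⟩,
      Gadget.blocksAllOnes_of_perfectMatching hn hH hT'card hT'⟩

/-- In the 3DM-gadget NTU LP game, a (nonempty) blocking coalition against the
all-ones utility vector exists if and only if the hypergraph `(H, T)` contains a
three-dimensional perfect matching. -/
theorem gadget_blocking_iff_3dm {V : Type*} [DecidableEq V] (n m : ℕ)
    (hn : 1 < n) (hnm : n ≤ m)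
    (hineq : 1 / (3 * (n : ℝ) + (m : ℝ)) <
      (1 / (4 * (n : ℝ))) * (1 - 1 / (2 * ((n : ℝ) - 1) * (4 * (n : ℝ) - 1))))
    (Xs Ys Zs : Finset V) (hX : Xs.card = n) (hY : Ys.card = n) (hZ : Zs.card = n)
    (hXY : Disjoint Xs Ys) (hXZ : Disjoint Xs Zs) (hYZ : Disjoint Ys Zs)
    (T : Fin m → V × V × V)
    (hT : ∀ e : Fin m, (T e).1 ∈ Xs ∧ (T e).2.1 ∈ Ys ∧ (T e).2.2 ∈ Zs) :
    (∃ S : Finset ({h : V // h ∈ Xs ∪ Ys ∪ Zs} ⊕ Fin m),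
        S.Nonempty ∧ blocksAllOnes n m (Xs ∪ Ys ∪ Zs) T S) ↔
      (∃ T' : Finset (Fin m), T'.card = n ∧
        ∀ h ∈ Xs ∪ Ys ∪ Zs, ∃! e : Fin m, e ∈ T' ∧ memEdge h (T e)) :=
  gadget_blocking_iff_3dm_general n m hn Xs Ys Zs hX hY hZ hXY hXZ hYZ T
end

section
/- In the 3DM-gadget NTU LP game, if S ⊆ H ∪ T is a blocking coalition against the all-ones utility vector u*, then |S ∩ H| = 3n and |S ∩ T| = n. -/
open Finset

/-!
Write `P = 4n - 1`, `Q = 3n + m`, `a = |S ∩ H|`, `b = |S ∩ T|`, and let `y` be the amount of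
the extra good in a blocking bundle `x`. Every edge player `e` of `S` needs
`n xₑ / P + y / Q > 1`, while the budget gives `∑ xₑ + y ≤ a + b ≤ Q`; summing over the `b`
edge players yields `b P ≤ n (a + b)`. In particular `S` contains a node player, and since a
node player values every edge good at most `1 / P` and the extra good at `1 / Q ≤ 1 / P`, it
needs `(a + b) / P > 1`, i.e. `a + b ≥ 4n`. Finally `a ≤ |H| ≤ 3n` and `b (3n - 1) ≤ n a ≤ 3n²`
force `b ≤ n`, hence `a = 3n` and `b = n`.
-/

namespace Finset

variable {α β : Type*} (u : Finset (α ⊕ β))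

theorem card_filter_isLeft : #(u.filter fun p => p.isLeft) = #u.toLeft := by
  conv_rhs => rw [← card_map (Function.Embedding.inl (β := β))]
  congr 1
  ext (a | b) <;> simp

theorem card_filter_isRight : #(u.filter fun p => p.isRight) = #u.toRight := by
  conv_rhs => rw [← card_map (Function.Embedding.inr (α := α))]
  congr 1
  ext (a | b) <;> simp

end Finset

theorem card_mul_le_of_one_lt_add_div {ι : Type*} (E : Finset ι) {x : ι → ℝ} {r P Q y c : ℝ}
    (hr : 0 ≤ r) (hP : 0 < P) (hQ : 0 < Q) (hx : ∀ e ∈ E, 0 ≤ x e) (hy : 0 ≤ y)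
    (hbudget : ∑ e ∈ E, x e + y ≤ c) (hcQ : c ≤ Q)
    (hutil : ∀ e ∈ E, 1 < r * x e / P + y / Q) : #E * P ≤ r * c := by
  rcases E.eq_empty_or_nonempty with rfl | hE
  · simpa using mul_nonneg hr (hy.trans (by simpa using hbudget))
  have hsum : (#E : ℝ) < r * (∑ e ∈ E, x e) / P + #E * y / Q := by
    calc (#E : ℝ) = ∑ _e ∈ E, (1 : ℝ) := by simp
      _ < ∑ e ∈ E, (r * x e / P + y / Q) := sum_lt_sum_of_nonempty hE hutil
      _ = _ := by rw [sum_add_distrib, ← sum_div, ← mul_sum]; simp [mul_div_assoc]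
  rw [div_add_div _ _ hP.ne' hQ.ne', lt_div_iff₀ (mul_pos hP hQ)] at hsum
  have hyQ : y ≤ Q := by linarith [sum_nonneg hx]
  have hσ : r * (∑ e ∈ E, x e) * Q ≤ r * (c - y) * Q := by gcongr; linarith
  by_contra! hlt
  nlinarith [mul_nonneg (mul_nonneg hr hy) (sub_nonneg.2 hcQ),
    mul_nonneg (sub_nonneg.2 hyQ) (sub_nonneg.2 hlt.le)]

theorem eq_three_mul_and_eq_of_card_bounds {n a b : ℕ} (hn : 1 ≤ n) (ha : a ≤ 3 * n)
    (hab : 4 * n ≤ a + b) (hb : b * (3 * n) ≤ n * a + b) : a = 3 * n ∧ b = n := by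
  have : b ≤ n := by
    by_contra! h
    nlinarith
  omega

section Gadget

variable {V : Type*} [DecidableEq V] {n m : ℕ} {Hset : Finset V} {T : Fin m → V × V × V}

theorem gadgetVal_inl_inl_le (hn : 1 ≤ n) (h : {h : V // h ∈ Hset}) (j : Fin m) :
    gadgetVal n m Hset T (.inl h) (.inl j) ≤ 1 / (4 * n - 1) := by
  have hn' : (1 : ℝ) ≤ n := by exact_mod_cast hn
  simp only [gadgetVal]
  split_ifs
  · rfl
  calc 1 / (4 * (n : ℝ)) * (1 - 1 / (2 * ((n : ℝ) - 1) * (4 * n - 1)))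
      ≤ 1 / (4 * n) * 1 := by
        gcongr
        exact sub_le_self _ <| one_div_nonneg.2 <| by nlinarith
    _ ≤ 1 / (4 * n - 1) := by rw [mul_one]; gcongr <;> linarith

theorem sum_gadgetVal_inl_mul_le (hn : 1 ≤ n) {x : Fin m ⊕ Unit → ℝ} (hx : ∀ j, 0 ≤ x j)
    (h : {h : V // h ∈ Hset}) :
    ∑ j, gadgetVal n m Hset T (.inl h) j * x j ≤
      (∑ j, x (.inl j)) / (4 * n - 1) + x (.inr ()) / (3 * n + m) := by
  simp only [Fintype.sum_sum_type, univ_unique, sum_singleton, Finset.sum_div]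
  gcongr with j
  · calc gadgetVal n m Hset T (.inl h) (.inl j) * x (.inl j)
        ≤ 1 / (4 * n - 1) * x (.inl j) := by gcongr; exacts [hx _, gadgetVal_inl_inl_le hn h j]
      _ = _ := one_div_mul_eq_div _ _
  · exact (one_div_mul_eq_div _ _).le

theorem sum_gadgetVal_inr_mul (e : Fin m) (x : Fin m ⊕ Unit → ℝ) :
    ∑ j, gadgetVal n m Hset T (.inr e) j * x j =
      n * x (.inl e) / (4 * n - 1) + x (.inr ()) / (3 * n + m) := by
  simp [Fintype.sum_sum_type, gadgetVal, ite_mul, div_eq_inv_mul, mul_assoc]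

variable {S : Finset ({h : V // h ∈ Hset} ⊕ Fin m)}

theorem card_toRight_mul_le_of_blocksAllOnes (hn : 1 ≤ n) (hH : #Hset ≤ 3 * n)
    (hS : blocksAllOnes n m Hset T S) : #S.toRight * (3 * n) ≤ n * #S.toLeft + #S.toRight := by
  obtain ⟨x, hx, hbudget, hblock⟩ := hS
  have hn' : (1 : ℝ) ≤ n := by exact_mod_cast hn
  have hSQ : (#S : ℝ) ≤ 3 * n + m := by
    have : #S ≤ #Hset + m := by simpa using card_le_univ S
    exact_mod_cast (by omega : #S ≤ 3 * n + m)
  have hbudget' : ∑ e ∈ S.toRight, x (.inl e) + x (.inr ()) ≤ #S := by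
    calc ∑ e ∈ S.toRight, x (.inl e) + x (.inr ())
        ≤ ∑ e : Fin m, x (.inl e) + x (.inr ()) := by
          gcongr
          exacts [fun _ _ _ => hx _, subset_univ _]
      _ = ∑ j, x j := by simp [Fintype.sum_sum_type]
      _ ≤ #S := hbudget
  have key := card_mul_le_of_one_lt_add_div S.toRight (by positivity) (by linarith)
    (by positivity) (fun e _ => hx (.inl e)) (hx _) hbudget' hSQ
    fun e he => sum_gadgetVal_inr_mul (Hset := Hset) (T := T) e x ▸ hblock _ (mem_toRight.1 he)
  rw [← card_toLeft_add_card_toRight] at key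
  push_cast at key
  have : (#S.toRight * (3 * n) : ℝ) ≤ n * #S.toLeft + #S.toRight := by linarith
  exact_mod_cast this

theorem four_mul_le_card_of_blocksAllOnes (hn : 1 ≤ n) (hnm : n ≤ m + 1)
    (hS : blocksAllOnes n m Hset T S) (hleft : S.toLeft.Nonempty) : 4 * n ≤ #S := by
  obtain ⟨x, hx, hbudget, hblock⟩ := hS
  obtain ⟨h, hh⟩ := hleft
  have hn' : (1 : ℝ) ≤ n := by exact_mod_cast hn
  have hnm' : (n : ℝ) ≤ m + 1 := by exact_mod_cast hnm
  have hP : (0 : ℝ) < 4 * n - 1 := by linarith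
  have hutil := (hblock _ (mem_toLeft.1 hh)).trans_le (sum_gadgetVal_inl_mul_le hn hx h)
  have : 4 * (n : ℝ) - 1 < #S := by
    rw [← one_lt_div hP]
    calc 1 < _ := hutil
      _ ≤ (∑ j, x (.inl j)) / (4 * n - 1) + x (.inr ()) / (4 * n - 1) := by
        gcongr
        · exact hx _
        · linarith
      _ = (∑ j, x j) / (4 * n - 1) := by simp [Fintype.sum_sum_type, add_div]
      _ ≤ #S / (4 * n - 1) := by gcongr
  have : ((4 * n : ℕ) : ℝ) < #S + 1 := by push_cast; linarith
  exact Nat.lt_succ_iff.1 (by exact_mod_cast this)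

end Gadget

theorem gadget_blocking_coalition_cards_general {V : Type*} [DecidableEq V] (n m : ℕ)
    (hn : 1 < n) (hnm : n ≤ m)
    (Xs Ys Zs : Finset V) (hX : Xs.card = n) (hY : Ys.card = n) (hZ : Zs.card = n)
    (T : Fin m → V × V × V)
    (S : Finset ({h : V // h ∈ Xs ∪ Ys ∪ Zs} ⊕ Fin m))
    (hS : S.Nonempty) (hblock : blocksAllOnes n m (Xs ∪ Ys ∪ Zs) T S) :
    (S.filter (fun p => p.isLeft)).card = 3 * n ∧
      (S.filter (fun p => p.isRight)).card = n := by
  have hH : #(Xs ∪ Ys ∪ Zs) ≤ 3 * n := by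
    grw [card_union_le, card_union_le, hX, hY, hZ]
    omega
  have hcard := S.card_toLeft_add_card_toRight
  have hedge := card_toRight_mul_le_of_blocksAllOnes hn.le hH hblock
  have hleft : S.toLeft.Nonempty := by
    rw [← card_pos]
    by_contra! h0
    have : 0 < #S.toRight := by have := hS.card_pos; omega
    nlinarith
  rw [card_filter_isLeft, card_filter_isRight]
  refine eq_three_mul_and_eq_of_card_bounds hn.le ?_ ?_ hedge
  · exact (card_le_univ _).trans (by simpa using hH)
  · exact hcard ▸ four_mul_le_card_of_blocksAllOnes hn.le (by omega) hblock hleft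

/-- In the 3DM-gadget NTU LP game, any blocking coalition `S` against the all-ones
utility vector satisfies `|S ∩ H| = 3n` and `|S ∩ T| = n`. -/
theorem gadget_blocking_coalition_cards {V : Type*} [DecidableEq V] (n m : ℕ)
    (hn : 1 < n) (hnm : n ≤ m)
    (hineq : 1 / (3 * (n : ℝ) + (m : ℝ)) <
      (1 / (4 * (n : ℝ))) * (1 - 1 / (2 * ((n : ℝ) - 1) * (4 * (n : ℝ) - 1))))
    (Xs Ys Zs : Finset V) (hX : Xs.card = n) (hY : Ys.card = n) (hZ : Zs.card = n)
    (hXY : Disjoint Xs Ys) (hXZ : Disjoint Xs Zs) (hYZ : Disjoint Ys Zs)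
    (T : Fin m → V × V × V)
    (hT : ∀ e : Fin m, (T e).1 ∈ Xs ∧ (T e).2.1 ∈ Ys ∧ (T e).2.2 ∈ Zs)
    (S : Finset ({h : V // h ∈ Xs ∪ Ys ∪ Zs} ⊕ Fin m))
    (hS : S.Nonempty) (hblock : blocksAllOnes n m (Xs ∪ Ys ∪ Zs) T S) :
    (S.filter (fun p => p.isLeft)).card = 3 * n ∧
      (S.filter (fun p => p.isRight)).card = n :=
  gadget_blocking_coalition_cards_general n m hn hnm Xs Ys Zs hX hY hZ T S hS hblock
end

section
/- In the 3DM-gadget NTU LP game, if S ⊆ H ∪ T is a blocking coalition against the all-ones utility vector u*, then for every node player h ∈ S ∩ H there exists an edge player t ∈ S ∩ T such that h is contained in the edge t. -/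
open Finset

/-!
Weak LP duality: if nonnegative weights on the members of `S` give every good a weighted value
at most (total weight) / `|S|`, then no bundle of total size `|S|` gives every member utility
above `1`. Suppose the node player `h ∈ S` lies in no edge of `S`; let `s = |S|` and let `k` be
the number of edge players in `S`, so `s ≤ k + 3n ≤ 3n + m`. Put weight `θ` on `h` and `β` on
every edge player. If `s < 4n`, then `h` alone (`θ = 1, β = 0`) is a certificate; if
`sn ≤ k(4n - 1)`, the edge players alone (`θ = 0, β = 1`) are; otherwise `s = 4n` and `k = n`,
and `θ = 1, β = 1/(2n(n - 1))` is a certificate exactly because of the correction term in the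
value of an edge good not containing `h`. That `h` is uncovered keeps its larger value
`1/(4n - 1)` off the goods of the edge players in `S`.
-/

theorem not_forall_one_lt_of_weighted_column_le {ι J : Type*} [Fintype J]
    (S : Finset ι) (v : ι → J → ℝ) {x : J → ℝ} (hx : ∀ j, 0 ≤ x j) {s : ℝ} (hs : 0 < s)
    (hxs : ∑ j, x j ≤ s) (w : ι → ℝ) (hw : ∀ i ∈ S, 0 ≤ w i) (hwS : 0 < ∑ i ∈ S, w i)
    (hcol : ∀ j, s * ∑ i ∈ S, w i * v i j ≤ ∑ i ∈ S, w i) :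
    ¬ ∀ i ∈ S, 1 < ∑ j, v i j * x j := by
  intro hu
  obtain ⟨i₀, hi₀, hwi₀⟩ := exists_lt_of_sum_lt (s := S) (f := 0) (g := w) (by simpa using hwS)
  have hlt : ∑ i ∈ S, w i < ∑ i ∈ S, w i * ∑ j, v i j * x j := by
    refine sum_lt_sum (fun i hi => ?_) ⟨i₀, hi₀, ?_⟩
    · simpa using mul_le_mul_of_nonneg_left (hu i hi).le (hw i hi)
    · simpa using mul_lt_mul_of_pos_left (hu i₀ hi₀) hwi₀
  have hle : s * ∑ i ∈ S, w i * ∑ j, v i j * x j ≤ s * ∑ i ∈ S, w i := calc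
    s * ∑ i ∈ S, w i * ∑ j, v i j * x j = ∑ j, x j * (s * ∑ i ∈ S, w i * v i j) := by
      simp_rw [mul_sum]
      rw [sum_comm]
      exact sum_congr rfl fun j _ => sum_congr rfl fun i _ => by ring
    _ ≤ ∑ j, x j * ∑ i ∈ S, w i :=
      sum_le_sum fun j _ => mul_le_mul_of_nonneg_left (hcol j) (hx j)
    _ = (∑ j, x j) * ∑ i ∈ S, w i := (sum_mul ..).symm
    _ ≤ s * ∑ i ∈ S, w i := mul_le_mul_of_nonneg_right hxs hwS.le
  linarith [mul_lt_mul_of_pos_left hlt hs]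

theorem card_toLeft_le_of_subtype_union {V ι : Type*} [DecidableEq V] {X Y Z : Finset V}
    (S : Finset ({h : V // h ∈ X ∪ Y ∪ Z} ⊕ ι)) : #S.toLeft ≤ #X + #Y + #Z := calc
  #S.toLeft ≤ Fintype.card {h : V // h ∈ X ∪ Y ∪ Z} := card_le_univ _
  _ = #(X ∪ Y ∪ Z) := Fintype.card_coe _
  _ ≤ #X + #Y + #Z := (card_union_le _ _).trans (by gcongr; exact card_union_le _ _)

section Gadget

variable {V : Type*} [DecidableEq V]

noncomputable def incidentEdgeVal (n : ℕ) : ℝ := 1 / (4 * (n : ℝ) - 1)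

noncomputable def otherEdgeVal (n : ℕ) : ℝ :=
  (1 / (4 * (n : ℝ))) * (1 - 1 / (2 * ((n : ℝ) - 1) * (4 * (n : ℝ) - 1)))

noncomputable def extraGoodVal (n m : ℕ) : ℝ := 1 / (3 * (n : ℝ) + (m : ℝ))

theorem incidentEdgeVal_mul (n : ℕ) : incidentEdgeVal n * (4 * n - 1) = 1 := by
  have : (4 * n - 1 : ℝ) ≠ 0 := by
    intro h
    have : (4 * n : ℝ) = 1 := by linarith
    norm_cast at this
    omega
  rw [incidentEdgeVal, one_div_mul_cancel this]

theorem incidentEdgeVal_pos {n : ℕ} (hn : 1 ≤ n) : 0 < incidentEdgeVal n := by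
  have : (1 : ℝ) ≤ n := by exact_mod_cast hn
  unfold incidentEdgeVal
  exact one_div_pos.2 (by linarith)

theorem otherEdgeVal_le_incidentEdgeVal {n : ℕ} (hn : 1 < n) :
    otherEdgeVal n ≤ incidentEdgeVal n := by
  have : (2 : ℝ) ≤ n := by exact_mod_cast hn
  unfold otherEdgeVal incidentEdgeVal
  rw [div_mul_eq_mul_div, one_mul, div_le_div_iff₀ (by linarith) (by linarith)]
  have : 0 ≤ 1 / (2 * ((n : ℝ) - 1) * (4 * n - 1)) := by
    apply div_nonneg zero_le_one; apply mul_nonneg <;> linarith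
  nlinarith

theorem mul_extraGoodVal_le_one {n m : ℕ} {s : ℝ} (hs : s ≤ 3 * n + m) :
    s * extraGoodVal n m ≤ 1 := by
  rw [extraGoodVal, mul_one_div]
  exact div_le_one_of_le₀ hs (by positivity)

theorem four_mul_incidentEdgeVal_le {n : ℕ} (hn : 1 < n) :
    4 * n * incidentEdgeVal n ≤ 1 + n * (1 / (2 * n * (n - 1))) := by
  have hn' : (2 : ℝ) ≤ n := by exact_mod_cast hn
  have hlhs : 4 * n * incidentEdgeVal n = 1 + 1 / (4 * n - 1) := by
    unfold incidentEdgeVal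
    field_simp [show (4 * n : ℝ) - 1 ≠ 0 by linarith]
    ring
  have hrhs : (n : ℝ) * (1 / (2 * n * (n - 1))) = 1 / (2 * (n - 1)) := by
    field_simp [show (n : ℝ) ≠ 0 by linarith]
  rw [hlhs, hrhs, add_le_add_iff_left]
  exact one_div_le_one_div_of_le (by linarith) (by linarith)

theorem four_mul_otherEdgeVal_add {n : ℕ} (hn : 1 < n) :
    4 * n * (otherEdgeVal n + 1 / (2 * n * (n - 1)) * (n * incidentEdgeVal n)) =
      1 + n * (1 / (2 * n * (n - 1))) := by
  have hn' : (2 : ℝ) ≤ n := by exact_mod_cast hn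
  have h1 : (n : ℝ) - 1 ≠ 0 := by linarith
  have h2 : (4 * n : ℝ) - 1 ≠ 0 := by linarith
  unfold incidentEdgeVal otherEdgeVal
  field_simp
  ring

variable {n m : ℕ} {H : Finset V} {T : Fin m → V × V × V}

theorem gadgetVal_inl_inl (z : {h : V // h ∈ H}) (e : Fin m) :
    gadgetVal n m H T (.inl z) (.inl e) =
      if memEdge z.1 (T e) then incidentEdgeVal n else otherEdgeVal n := rfl

theorem gadgetVal_inr_inl (t e : Fin m) :
    gadgetVal n m H T (.inr t) (.inl e) = if e = t then n * incidentEdgeVal n else 0 := by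
  rw [incidentEdgeVal, mul_one_div]; rfl

theorem gadgetVal_inl_inr (z : {h : V // h ∈ H}) (u : Unit) :
    gadgetVal n m H T (.inl z) (.inr u) = extraGoodVal n m := rfl

theorem gadgetVal_inr_inr (t : Fin m) (u : Unit) :
    gadgetVal n m H T (.inr t) (.inr u) = extraGoodVal n m := rfl

noncomputable def gadgetWeight (h : {h : V // h ∈ H}) (θ β : ℝ) :
    {h : V // h ∈ H} ⊕ Fin m → ℝ :=
  Sum.elim (fun z => if z = h then θ else 0) fun _ => β

variable {S : Finset ({h : V // h ∈ H} ⊕ Fin m)} {h : {h : V // h ∈ H}} {θ β : ℝ}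

theorem sum_gadgetWeight (hhS : .inl h ∈ S) :
    ∑ i ∈ S, gadgetWeight h θ β i = θ + #S.toRight * β := by
  rw [sum_sum_eq_sum_toLeft_add_sum_toRight]
  simp [gadgetWeight, hhS]

theorem sum_gadgetWeight_mul_gadgetVal_inl (hhS : .inl h ∈ S) (e : Fin m) :
    ∑ i ∈ S, gadgetWeight h θ β i * gadgetVal n m H T i (.inl e) =
      θ * (if memEdge h.1 (T e) then incidentEdgeVal n else otherEdgeVal n) +
        β * (if .inr e ∈ S then n * incidentEdgeVal n else 0) := by
  rw [sum_sum_eq_sum_toLeft_add_sum_toRight]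
  simp only [gadgetWeight, Sum.elim_inl, Sum.elim_inr, ite_mul, zero_mul, sum_ite_eq',
    mem_toLeft, hhS, if_true, gadgetVal_inl_inl, gadgetVal_inr_inl, ← mul_sum, sum_ite_eq,
    mem_toRight]

theorem sum_gadgetWeight_mul_gadgetVal_inr (hhS : .inl h ∈ S) (u : Unit) :
    ∑ i ∈ S, gadgetWeight h θ β i * gadgetVal n m H T i (.inr u) =
      (θ + #S.toRight * β) * extraGoodVal n m := by
  rw [sum_sum_eq_sum_toLeft_add_sum_toRight]
  simp only [gadgetWeight, Sum.elim_inl, Sum.elim_inr, gadgetVal_inl_inr, gadgetVal_inr_inr,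
    ite_mul, zero_mul, sum_ite_eq', mem_toLeft, hhS, if_true, sum_const, nsmul_eq_mul]
  ring

theorem gadgetWeight_nonneg (hθ : 0 ≤ θ) (hβ : 0 ≤ β) (i : {h : V // h ∈ H} ⊕ Fin m) :
    0 ≤ gadgetWeight h θ β i := by
  rcases i with z | t
  · by_cases hz : z = h <;> simp [gadgetWeight, hz, hθ]
  · exact hβ

theorem gadget_weighted_column_le (hn : 1 < n) (hhS : .inl h ∈ S)
    (hcov : ∀ e, .inr e ∈ S → ¬ memEdge h.1 (T e)) (hS : #S * extraGoodVal n m ≤ 1)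
    (hθ : 0 ≤ θ) (hβ : 0 ≤ β)
    (hinc : #S * (θ * incidentEdgeVal n) ≤ θ + #S.toRight * β)
    (hoth : #S * (θ * otherEdgeVal n + β * (n * incidentEdgeVal n)) ≤ θ + #S.toRight * β)
    (j : Fin m ⊕ Unit) :
    #S * ∑ i ∈ S, gadgetWeight h θ β i * gadgetVal n m H T i j ≤
      ∑ i ∈ S, gadgetWeight h θ β i := by
  rw [sum_gadgetWeight hhS]
  rcases j with e | u
  · rw [sum_gadgetWeight_mul_gadgetVal_inl hhS]
    by_cases heS : .inr e ∈ S
    · rwa [if_neg (hcov e heS), if_pos heS]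
    · rw [if_neg heS, mul_zero, add_zero]
      refine le_trans ?_ hinc
      gcongr
      split_ifs
      exacts [le_rfl, otherEdgeVal_le_incidentEdgeVal hn]
  · rw [sum_gadgetWeight_mul_gadgetVal_inr hhS, mul_left_comm]
    exact mul_le_of_le_one_right (by positivity) hS

end Gadget

theorem eq_of_four_mul_le_of_le_add {n s k : ℕ} (hn : 1 ≤ n) (hs : 4 * n ≤ s)
    (hsk : s ≤ k + 3 * n) (hlt : 4 * k * n < s * n + k) : s = 4 * n ∧ k = n := by
  have hk : k ≤ n := by nlinarith
  omega

theorem exists_gadget_weights {n s k : ℕ} (hn : 1 < n) (hs : 0 < s) (hsk : s ≤ k + 3 * n) :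
    ∃ θ β : ℝ, 0 ≤ θ ∧ 0 ≤ β ∧ 0 < θ + k * β ∧
      s * (θ * incidentEdgeVal n) ≤ θ + k * β ∧
      s * (θ * otherEdgeVal n + β * (n * incidentEdgeVal n)) ≤ θ + k * β := by
  have ha := incidentEdgeVal_mul n
  have ha0 := incidentEdgeVal_pos hn.le
  have hba := otherEdgeVal_le_incidentEdgeVal hn
  rcases lt_or_ge s (4 * n) with hsmall | hlarge
  · have hs' : (s : ℝ) + 1 ≤ 4 * n := by exact_mod_cast hsmall
    refine ⟨1, 0, zero_le_one, le_rfl, by simp, ?_, ?_⟩ <;> nlinarith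
  rcases le_or_gt (s * n + k) (4 * k * n) with hmany | hfew
  · have hk : 0 < k := Nat.pos_of_ne_zero fun hk0 => by
      simp only [hk0, add_zero, mul_zero, zero_mul, nonpos_iff_eq_zero, mul_eq_zero] at hmany
      omega
    have hmany' : (s * n + k : ℝ) ≤ 4 * k * n := by exact_mod_cast hmany
    have hk' : (0 : ℝ) < k := by exact_mod_cast hk
    refine ⟨0, 1, le_rfl, zero_le_one, by simpa, by simp, ?_⟩
    nlinarith
  · obtain ⟨hs4, hkn⟩ := eq_of_four_mul_le_of_le_add hn.le hlarge hsk hfew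
    rw [hs4, hkn]
    push_cast
    have hn' : (2 : ℝ) ≤ n := by exact_mod_cast hn
    have hβ : (0 : ℝ) < 1 / (2 * n * (n - 1)) :=
      one_div_pos.2 (mul_pos (by linarith) (by linarith))
    refine ⟨1, 1 / (2 * n * (n - 1)), zero_le_one, hβ.le,
      add_pos_of_pos_of_nonneg one_pos (mul_nonneg n.cast_nonneg hβ.le), ?_, ?_⟩
    · simpa only [one_mul] using four_mul_incidentEdgeVal_le hn
    · simpa only [one_mul] using (four_mul_otherEdgeVal_add hn).le

theorem gadget_blocking_coalition_covered_general {V : Type*} [DecidableEq V] (n m : ℕ)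
    (hn : 1 < n)
    (Xs Ys Zs : Finset V) (hX : Xs.card = n) (hY : Ys.card = n) (hZ : Zs.card = n)
    (T : Fin m → V × V × V)
    (S : Finset ({h : V // h ∈ Xs ∪ Ys ∪ Zs} ⊕ Fin m))
    (hblock : blocksAllOnes n m (Xs ∪ Ys ∪ Zs) T S) :
    ∀ h : {h : V // h ∈ Xs ∪ Ys ∪ Zs}, Sum.inl h ∈ S →
      ∃ e : Fin m, Sum.inr e ∈ S ∧ memEdge h.1 (T e) := by
  intro h hhS
  by_contra! hcov
  obtain ⟨x, hx0, hxS, hu⟩ := hblock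
  have hS : 0 < #S := card_pos.2 ⟨_, hhS⟩
  have hnodes : #S.toLeft ≤ 3 * n := by
    have := card_toLeft_le_of_subtype_union S
    omega
  have hedges : #S.toRight ≤ m := by simpa using card_le_univ S.toRight
  have hsplit := card_toLeft_add_card_toRight (u := S)
  have hSm : (#S : ℝ) ≤ 3 * n + m := by exact_mod_cast (by omega : #S ≤ 3 * n + m)
  obtain ⟨θ, β, hθ, hβ, hW, hinc, hoth⟩ :=
    exists_gadget_weights (s := #S) (k := #S.toRight) hn hS (by omega)
  exact not_forall_one_lt_of_weighted_column_le S _ hx0 (by exact_mod_cast hS) hxS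
    (gadgetWeight h θ β) (fun i _ => gadgetWeight_nonneg hθ hβ i)
    (by rwa [sum_gadgetWeight hhS])
    (gadget_weighted_column_le hn hhS hcov (mul_extraGoodVal_le_one hSm) hθ hβ hinc hoth) hu

/-- In the 3DM-gadget NTU LP game, if `S` is a blocking coalition against the
all-ones utility vector, then every node player in `S` is contained in some edge
whose edge player also belongs to `S`. -/
theorem gadget_blocking_coalition_covered {V : Type*} [DecidableEq V] (n m : ℕ)
    (hn : 1 < n) (hnm : n ≤ m)
    (hineq : 1 / (3 * (n : ℝ) + (m : ℝ)) <
      (1 / (4 * (n : ℝ))) * (1 - 1 / (2 * ((n : ℝ) - 1) * (4 * (n : ℝ) - 1))))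
    (Xs Ys Zs : Finset V) (hX : Xs.card = n) (hY : Ys.card = n) (hZ : Zs.card = n)
    (hXY : Disjoint Xs Ys) (hXZ : Disjoint Xs Zs) (hYZ : Disjoint Ys Zs)
    (T : Fin m → V × V × V)
    (hT : ∀ e : Fin m, (T e).1 ∈ Xs ∧ (T e).2.1 ∈ Ys ∧ (T e).2.2 ∈ Zs)
    (S : Finset ({h : V // h ∈ Xs ∪ Ys ∪ Zs} ⊕ Fin m))
    (hS : S.Nonempty) (hblock : blocksAllOnes n m (Xs ∪ Ys ∪ Zs) T S) :
    ∀ h : {h : V // h ∈ Xs ∪ Ys ∪ Zs}, Sum.inl h ∈ S →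
      ∃ e : Fin m, Sum.inr e ∈ S ∧ memEdge h.1 (T e) :=
  gadget_blocking_coalition_covered_general n m hn Xs Ys Zs hX hY hZ T S hblock
end
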